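/- arXiv:2307.10280 — 6 statements merged into one kernel-verified Lean document; each statement's English description precedes it below -/
import Mathlib

section
/- For any ε > 0 there is a constant c(ε) > 0 such that for every nonzero polynomial f over a finite field F_q of degree at least 2, the number of monic divisors τ(f) of f satisfies τ(f) ≤ c(ε) · q^{(2+ε)·deg(f)/log(deg f)}. -/
/-!
Let `n = deg f`, `q = |F_q|`, and split the monic irreducible factors of `f` at the degree
`d = ⌊log_q n⌋ / 2`, so that `q ^ (2d) ≤ n < q ^ (2d + 2)`. A monic divisor of `f` is determined
by its exponents at the small primes (degree `≤ d`), of which there are at most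
`(d + 1) q ^ d ≤ (log n + 1) √n`, each exponent being at most `n`, together with a sub-multiset of
the large prime factors, of which there are at most `n / (d + 1) < 2 n log q / log n`. Hence
`τ(f) ≤ (n + 1) ^ ((log n + 1) √n) · q ^ (2n / log n)`, and the first factor is
`O_ε(q ^ (ε n / log n))` because `(log n + 1)² √n = o(n / log n)`.
-/

open Polynomial Real UniqueFactorizationMonoid

namespace Multiset

variable {α : Type*} [DecidableEq α]

theorem card_toFinset_powerset_le_two_pow (s : Multiset α) :
    s.powerset.toFinset.card ≤ 2 ^ card s :=
  (toFinset_card_le _).trans (card_powerset s).le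

theorem card_toFinset_powerset_le_pow (s : Multiset α) :
    s.powerset.toFinset.card ≤ (card s + 1) ^ s.toFinset.card := by
  have key := Finset.card_le_card_of_injOn (fun t (a : s.toFinset) => count (a : α) t)
    (s := s.powerset.toFinset)
    (t := Fintype.piFinset fun _ : s.toFinset => Finset.range (card s + 1)) ?_ ?_
  · simpa using key
  · intro t ht
    simp only [Finset.mem_coe, mem_toFinset, mem_powerset] at ht
    simp only [Finset.mem_coe, Fintype.mem_piFinset, Finset.mem_range, Nat.lt_succ_iff]
    exact fun a => (count_le_of_le _ ht).trans (count_le_card _ _)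
  · intro t ht t' ht' h
    simp only [Finset.mem_coe, mem_toFinset, mem_powerset] at ht ht'
    ext a
    by_cases ha : a ∈ s
    · exact congrFun h ⟨a, mem_toFinset.2 ha⟩
    · rw [count_eq_zero.2 fun h => ha (mem_of_le ht h),
        count_eq_zero.2 fun h => ha (mem_of_le ht' h)]

theorem card_toFinset_powerset_le_mul (s : Multiset α) (p : α → Prop) [DecidablePred p] :
    s.powerset.toFinset.card ≤
      (s.filter p).powerset.toFinset.card * (s.filter (¬p ·)).powerset.toFinset.card := by
  rw [← Finset.card_product]
  refine Finset.card_le_card_of_injOn (fun t => (t.filter p, t.filter (¬p ·))) ?_ ?_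
  · intro t ht
    simp only [Finset.mem_coe, mem_toFinset, mem_powerset, Finset.mem_product] at ht ⊢
    exact ⟨filter_le_filter _ ht, filter_le_filter _ ht⟩
  · intro t _ t' _ h
    simp only [Prod.mk.injEq] at h
    rw [← filter_add_not p t, ← filter_add_not p t', h.1, h.2]

end Multiset

namespace UniqueFactorizationMonoid

variable {α : Type*} [CommMonoidWithZero α] [StrongNormalizationMonoid α]
  [UniqueFactorizationMonoid α] [DecidableEq α]

theorem card_le_card_toFinset_powerset_normalizedFactors {a : α} (ha : a ≠ 0)
    (D : Finset α) (hD : ∀ d ∈ D, normalize d = d ∧ d ∣ a) :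
    D.card ≤ (normalizedFactors a).powerset.toFinset.card := by
  have hne : ∀ d ∈ D, d ≠ 0 := fun d hd h => ha (zero_dvd_iff.1 (h ▸ (hD d hd).2))
  refine Finset.card_le_card_of_injOn normalizedFactors (fun d hd => ?_) (fun d hd d' hd' h => ?_)
  · simpa using (dvd_iff_normalizedFactors_le_normalizedFactors (hne d hd) ha).1 (hD d hd).2
  · rw [← (hD d hd).1, ← (hD d' hd').1, ← prod_normalizedFactors_eq (hne d hd),
      ← prod_normalizedFactors_eq (hne d' hd'), h]

end UniqueFactorizationMonoid

namespace Polynomial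

theorem card_le_of_monic_of_natDegree_le {R : Type*} [Semiring R] [Fintype R] (d : ℕ)
    (S : Finset R[X]) (hS : ∀ p ∈ S, p.Monic ∧ p.natDegree ≤ d) :
    S.card ≤ (d + 1) * Fintype.card R ^ d := by
  classical
  have key := Finset.card_le_card_of_injOn
    (fun p : R[X] => (p.natDegree, fun i : Fin d => p.coeff i)) (s := S)
    (t := Finset.range (d + 1) ×ˢ Finset.univ) ?_ ?_
  · simpa using key
  · intro p hp
    simpa [Nat.lt_succ_iff] using (hS p hp).2
  · intro p hp p' hp' h
    simp only [Prod.mk.injEq, funext_iff] at h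
    obtain ⟨⟨hmon, hdeg⟩, hmon', -⟩ := And.intro (hS p hp) (hS p' hp')
    ext j
    rcases lt_or_ge j d with hj | hj
    · exact h.2 ⟨j, hj⟩
    rcases (hdeg.trans hj).eq_or_lt with rfl | hlt
    · rw [hmon.coeff_natDegree, h.1, hmon'.coeff_natDegree]
    · rw [coeff_eq_zero_of_natDegree_lt hlt, coeff_eq_zero_of_natDegree_lt (h.1 ▸ hlt)]

section

variable {K : Type*} [Field K] [DecidableEq K]

theorem sum_natDegree_normalizedFactors {f : K[X]} (hf : f ≠ 0) :
    ((normalizedFactors f).map natDegree).sum = f.natDegree := by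
  rw [← natDegree_multiset_prod _ (zero_notMem_normalizedFactors f),
    prod_normalizedFactors_eq hf, natDegree_eq_of_degree_eq (degree_normalize (p := f))]

theorem card_filter_normalizedFactors_mul_le_natDegree {f : K[X]} (hf : f ≠ 0) (d : ℕ) :
    Multiset.card ((normalizedFactors f).filter (fun p : K[X] => d < p.natDegree)) * (d + 1) ≤
      f.natDegree := by
  set m := normalizedFactors f
  calc Multiset.card (m.filter (fun p : K[X] => d < p.natDegree)) * (d + 1)
      ≤ ((m.filter (fun p : K[X] => d < p.natDegree)).map natDegree).sum := by
        rw [← smul_eq_mul, ← Multiset.card_map natDegree]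
        exact Multiset.card_nsmul_le_sum (a := d + 1) fun k hk => by
          obtain ⟨p, hp, rfl⟩ := Multiset.mem_map.1 hk
          exact Nat.succ_le_of_lt (Multiset.mem_filter.1 hp).2
    _ ≤ (m.map natDegree).sum := by
        conv_rhs => rw [← Multiset.filter_add_not (fun p : K[X] => d < p.natDegree) m]
        rw [Multiset.map_add, Multiset.sum_add]
        exact Nat.le_add_right _ _
    _ = f.natDegree := sum_natDegree_normalizedFactors hf

theorem card_normalizedFactors_le_natDegree {f : K[X]} (hf : f ≠ 0) :
    Multiset.card (normalizedFactors f) ≤ f.natDegree := by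
  have hpos : ∀ p ∈ normalizedFactors f, 0 < p.natDegree := fun p hp =>
    (irreducible_of_normalized_factor p hp).natDegree_pos
  simpa [Multiset.filter_eq_self.2 hpos] using card_filter_normalizedFactors_mul_le_natDegree hf 0

end

theorem card_le_of_forall_monic_dvd {K : Type*} [Field K] [Fintype K] {f : K[X]} (hf : f ≠ 0)
    (D : Finset K[X]) (hD : ∀ g ∈ D, g.Monic ∧ g ∣ f) (d : ℕ) :
    D.card ≤ (f.natDegree + 1) ^ ((d + 1) * Fintype.card K ^ d) * 2 ^ (f.natDegree / (d + 1)) := by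
  classical
  set m := normalizedFactors f
  set small := m.filter (fun p : K[X] => p.natDegree ≤ d)
  set large := m.filter (fun p : K[X] => ¬p.natDegree ≤ d)
  have hsmall : small.toFinset.card ≤ (d + 1) * Fintype.card K ^ d := by
    refine card_le_of_monic_of_natDegree_le d _ fun p hp => ?_
    obtain ⟨hpm, hpd⟩ := Multiset.mem_filter.1 (Multiset.mem_toFinset.1 hp)
    exact ⟨((Polynomial.mem_normalizedFactors_iff hf).1 hpm).2.1, hpd⟩
  have hlarge : Multiset.card large ≤ f.natDegree / (d + 1) := by
    rw [Nat.le_div_iff_mul_le d.succ_pos]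
    simpa only [large, not_le] using card_filter_normalizedFactors_mul_le_natDegree hf d
  have hcard : Multiset.card small ≤ f.natDegree :=
    (Multiset.card_le_card (Multiset.filter_le _ _)).trans (card_normalizedFactors_le_natDegree hf)
  calc D.card ≤ m.powerset.toFinset.card :=
        card_le_card_toFinset_powerset_normalizedFactors hf D fun g hg =>
          ⟨(hD g hg).1.normalize_eq_self, (hD g hg).2⟩
    _ ≤ small.powerset.toFinset.card * large.powerset.toFinset.card :=
        Multiset.card_toFinset_powerset_le_mul m _
    _ ≤ (Multiset.card small + 1) ^ small.toFinset.card * 2 ^ Multiset.card large :=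
        Nat.mul_le_mul (Multiset.card_toFinset_powerset_le_pow _)
          (Multiset.card_toFinset_powerset_le_two_pow _)
    _ ≤ (f.natDegree + 1) ^ ((d + 1) * Fintype.card K ^ d) * 2 ^ (f.natDegree / (d + 1)) :=
        Nat.mul_le_mul
          ((Nat.pow_le_pow_left (Nat.succ_le_succ hcard) _).trans
            (Nat.pow_le_pow_right f.natDegree.succ_pos hsmall))
          (Nat.pow_le_pow_right two_pos hlarge)

end Polynomial

theorem mul_pow_le_add_mul_pow_succ {a b t : ℝ} (k : ℕ) (ha : 0 ≤ a) (hb : 0 < b) (ht : 0 ≤ t) :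
    a * t ^ k ≤ a * (a / b) ^ k + b * t ^ (k + 1) := by
  rcases le_or_gt t (a / b) with hta | hat
  · have := mul_le_mul_of_nonneg_left (pow_le_pow_left₀ ht hta k) ha
    nlinarith [pow_nonneg ht (k + 1)]
  · have hab : a ≤ b * t := ((div_lt_iff₀' hb).1 hat).le
    have := mul_le_mul_of_nonneg_right hab (pow_nonneg ht k)
    nlinarith [pow_nonneg (div_nonneg ha hb.le) k, pow_succ t k]

theorem exists_sq_log_add_one_mul_sqrt_le {ε : ℝ} (hε : 0 < ε) :
    ∃ C, ∀ x : ℝ, 1 < x → (log x + 1) ^ 2 * √x ≤ C + ε * x / log x := by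
  refine ⟨64 * (64 / (ε / 8)) ^ 6, fun x hx => ?_⟩
  obtain ⟨t, ht, rfl⟩ : ∃ t : ℝ, 1 < t ∧ t ^ 8 = x :=
    ⟨x ^ (8⁻¹ : ℝ), one_lt_rpow hx (by norm_num), rpow_inv_natCast_pow (by linarith) (by norm_num)⟩
  have hlog : log (t ^ 8) = 8 * log t := by rw [log_pow]; norm_num
  have hlogt : 0 < log t := log_pos ht
  have hlog_le : log t ≤ t - 1 := log_le_sub_one_of_pos (by linarith)
  have hsqrt : √(t ^ 8) = t ^ 4 := by
    rw [show t ^ 8 = (t ^ 4) ^ 2 by ring, sqrt_sq (by positivity)]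
  have hsmall : (log (t ^ 8) + 1) ^ 2 * √(t ^ 8) ≤ 64 * t ^ 6 := by
    rw [hlog, hsqrt]
    have h8 : 8 * log t + 1 ≤ 8 * t := by linarith
    calc (8 * log t + 1) ^ 2 * t ^ 4 ≤ (8 * t) ^ 2 * t ^ 4 := by gcongr
      _ = 64 * t ^ 6 := by ring
  have hlarge : ε / 8 * t ^ 7 ≤ ε * t ^ 8 / log (t ^ 8) := by
    rw [hlog, le_div_iff₀ (by positivity)]
    have := mul_le_mul_of_nonneg_left hlog_le (by positivity : 0 ≤ ε * t ^ 7)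
    nlinarith
  linarith [mul_pow_le_add_mul_pow_succ 6 (by norm_num : (0 : ℝ) ≤ 64) (by positivity : 0 < ε / 8)
    (by linarith : 0 ≤ t)]

theorem succ_pow_le_exp_mul_rpow {q n d : ℕ} {C ε : ℝ} (hε : 0 < ε) (hq : 2 ≤ q) (hn : 2 ≤ n)
    (hqd : q ^ (2 * d) ≤ n)
    (hC : (log n + 1) ^ 2 * √(n : ℝ) ≤ C + ε * log 2 * n / log n) :
    ((n : ℝ) + 1) ^ ((d + 1) * q ^ d) ≤ exp C * (q : ℝ) ^ (ε * n / log n) := by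
  have hqR : (2 : ℝ) ≤ q := by exact_mod_cast hq
  have hnR : (2 : ℝ) ≤ n := by exact_mod_cast hn
  have hL : 0 < log n := log_pos (by linarith)
  have hQ : log 2 ≤ log q := log_le_log (by norm_num) hqR
  have hqdR : ((q : ℝ) ^ d) ^ 2 ≤ n := by rw [← pow_mul, mul_comm]; exact_mod_cast hqd
  have hd : (d : ℝ) + 1 ≤ log n + 1 := by
    have h1 : 2 * d * log q ≤ log n := by
      have := log_le_log (by positivity) (by exact_mod_cast hqd : (q : ℝ) ^ (2 * d) ≤ n)
      rwa [log_pow, Nat.cast_mul, Nat.cast_ofNat] at this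
    nlinarith [log_two_gt_d9, (Nat.cast_nonneg d : (0 : ℝ) ≤ d)]
  have hsqrt : (q : ℝ) ^ d ≤ √(n : ℝ) := (le_sqrt (by positivity) (by positivity)).2 hqdR
  have hlog1 : log ((n : ℝ) + 1) ≤ log n + 1 := by
    calc log ((n : ℝ) + 1) ≤ log (exp 1 * n) :=
          log_le_log (by positivity) (by nlinarith [add_one_le_exp (1 : ℝ)])
      _ = log n + 1 := by rw [log_mul (exp_pos 1).ne' (by positivity), log_exp, add_comm]
  have hexp : ((d + 1) * q ^ d : ℕ) * log ((n : ℝ) + 1) ≤ C + ε * log q * n / log n := by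
    calc ((d + 1) * q ^ d : ℕ) * log ((n : ℝ) + 1)
        ≤ (log n + 1) * √(n : ℝ) * (log n + 1) := by
          push_cast
          gcongr
          exact log_nonneg (by linarith)
      _ = (log n + 1) ^ 2 * √(n : ℝ) := by ring
      _ ≤ C + ε * log 2 * n / log n := hC
      _ ≤ C + ε * log q * n / log n := by gcongr
  calc ((n : ℝ) + 1) ^ ((d + 1) * q ^ d)
      = exp (((d + 1) * q ^ d : ℕ) * log ((n : ℝ) + 1)) := by
        rw [← log_pow, exp_log (by positivity)]
    _ ≤ exp (C + ε * log q * n / log n) := exp_le_exp.2 hexp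
    _ = exp C * (q : ℝ) ^ (ε * n / log n) := by
        rw [exp_add, rpow_def_of_pos (by positivity)]
        ring_nf

theorem two_pow_div_le_rpow {q n d : ℕ} (hq : 2 ≤ q) (hn : 2 ≤ n) (hnq : n < q ^ (2 * (d + 1))) :
    (2 : ℝ) ^ (n / (d + 1)) ≤ (q : ℝ) ^ (2 * n / log n) := by
  have hqR : (2 : ℝ) ≤ q := by exact_mod_cast hq
  have hnR : (2 : ℝ) ≤ n := by exact_mod_cast hn
  have hL : 0 < log n := log_pos (by linarith)
  have hLQ : log n < 2 * (d + 1) * log q := by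
    have := log_lt_log (by positivity) (by exact_mod_cast hnq : (n : ℝ) < (q : ℝ) ^ (2 * (d + 1)))
    rw [log_pow] at this
    push_cast at this
    linarith
  have hk : ((n / (d + 1) : ℕ) : ℝ) ≤ 2 * n / log n * log q := by
    calc ((n / (d + 1) : ℕ) : ℝ) ≤ n / (d + 1) := by exact_mod_cast Nat.cast_div_le
      _ ≤ 2 * n / log n * log q := by
        rw [div_mul_eq_mul_div, div_le_div_iff₀ (by positivity) hL]
        nlinarith
  calc (2 : ℝ) ^ (n / (d + 1)) ≤ exp 1 ^ (n / (d + 1)) := by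
        gcongr
        linarith [add_one_le_exp (1 : ℝ)]
    _ = exp ((n / (d + 1) : ℕ)) := exp_one_pow _
    _ ≤ exp (2 * n / log n * log q) := exp_le_exp.2 hk
    _ = (q : ℝ) ^ (2 * n / log n) := by rw [rpow_def_of_pos (by positivity), mul_comm]

/-- For any `ε > 0` there is a constant `c(ε) > 0` such that for every nonzero
polynomial `f` over a finite field `F_q` of degree at least `2`, the number of
monic divisors `τ(f)` of `f` satisfies
`τ(f) ≤ c(ε) · q^((2+ε)·deg f / log (deg f))`. -/
theorem divisor_count_bound :
    ∀ ε : ℝ, 0 < ε → ∃ c : ℝ, 0 < c ∧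
      ∀ (Fq : Type) [Field Fq] [Fintype Fq] (f : Polynomial Fq)
        (D : Finset (Polynomial Fq)),
        f ≠ 0 → 2 ≤ f.natDegree →
        (∀ d, d ∈ D ↔ d.Monic ∧ d ∣ f) →
        (D.card : ℝ) ≤ c * (Fintype.card Fq : ℝ) ^
          ((2 + ε) * (f.natDegree : ℝ) / Real.log (f.natDegree : ℝ)) := by
  intro ε hε
  obtain ⟨C, hC⟩ := exists_sq_log_add_one_mul_sqrt_le (mul_pos hε (log_pos one_lt_two))
  refine ⟨exp C, exp_pos C, fun Fq _ _ f D hf hn hD => ?_⟩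
  set q := Fintype.card Fq
  set n := f.natDegree
  have hq : 2 ≤ q := Fintype.one_lt_card
  set d := Nat.log q n / 2
  have hqd : q ^ (2 * d) ≤ n :=
    (Nat.pow_le_pow_right (by omega) (by omega)).trans (Nat.pow_log_le_self q (by omega))
  have hnq : n < q ^ (2 * (d + 1)) :=
    (Nat.lt_pow_succ_log_self hq n).trans_le (Nat.pow_le_pow_right (by omega) (by omega))
  calc (D.card : ℝ) ≤ ((n : ℝ) + 1) ^ ((d + 1) * q ^ d) * 2 ^ (n / (d + 1)) := by
        exact_mod_cast card_le_of_forall_monic_dvd hf D (fun g hg => (hD g).1 hg) d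
    _ ≤ exp C * (q : ℝ) ^ (ε * n / log n) * (q : ℝ) ^ (2 * n / log n) := by
        gcongr
        · exact succ_pow_le_exp_mul_rpow hε hq hn hqd (hC n (by exact_mod_cast hn))
        · exact two_pow_div_le_rpow hq hn hnq
    _ = exp C * (q : ℝ) ^ ((2 + ε) * n / log n) := by
        rw [mul_assoc, ← rpow_add (by positivity)]
        ring_nf
end

section
/- Let f be a polynomial over F_q with factorization f = g_1^{e_1}···g_k^{e_k} into distinct monic irreducibles. Then for any λ > 0, τ(f)/exp(λ·deg f) ≤ ∏_{i : deg g_i ≤ 1/λ} (e_i+1)/(1+λ e_i deg g_i), and since there are at most q^{1/λ} monic irreducible polynomials of degree at most 1/λ, one has τ(f) ≤ exp(λ·deg f) · exp(q^{1/λ} · log(1/λ)) whenever 0 < λ < 1. -/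
/-!
The monic divisors of `∏ gᵢ ^ eᵢ` are exactly the products `∏ gᵢ ^ aᵢ` with `aᵢ ≤ eᵢ`, so
`τ(f) = ∏ (eᵢ + 1)` and `τ(f) / exp (λ deg f) = ∏ (eᵢ + 1) / exp (λ eᵢ deg gᵢ)`.
Since `exp t ≥ 1 + t`, each factor is at most `(eᵢ + 1) / (1 + λ eᵢ deg gᵢ)`, and at most `1`
once `λ deg gᵢ > 1`. For `λ < 1` the surviving factors are at most `1 / λ`, and there are at most
`q ^ (1 / λ)` of them: the distinct monic irreducibles of degree `d` all divide `X ^ q ^ d - X`,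
so there are at most `q ^ d / d` of them, and `∑_{1 ≤ d ≤ m} q ^ d / d ≤ q ^ m`.
-/

open Polynomial

theorem exists_associated_prod_pow_of_dvd_prod_pow {α ι : Type*} [CommMonoidWithZero α]
    [IsCancelMulZero α] [DecompositionMonoid α] {p : ι → α} (e : ι → ℕ) (s : Finset ι)
    (hp : ∀ i ∈ s, Prime (p i)) {d : α} (hd : d ∣ ∏ i ∈ s, p i ^ e i) :
    ∃ a : ι → ℕ, a ≤ e ∧ Associated d (∏ i ∈ s, p i ^ a i) := by
  classical
  induction s using Finset.induction generalizing d with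
  | empty =>
    refine ⟨0, fun i => Nat.zero_le _, ?_⟩
    simpa [associated_one_iff_isUnit] using isUnit_of_dvd_one (by simpa using hd)
  | insert j s hj ih =>
    rw [Finset.prod_insert hj] at hd
    obtain ⟨d₁, d₂, hd₁, hd₂, rfl⟩ := exists_dvd_and_dvd_of_dvd_mul hd
    obtain ⟨n, hn, hd₁⟩ := (dvd_prime_pow (hp j (s.mem_insert_self j)) _).1 hd₁
    obtain ⟨a, hae, hd₂⟩ := ih (fun i hi => hp i (Finset.mem_insert_of_mem hi)) hd₂
    refine ⟨Function.update a j n, fun i => ?_, ?_⟩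
    · rcases eq_or_ne i j with rfl | hij
      · simpa using hn
      · simpa [hij] using hae i
    · have hs : ∏ i ∈ s, p i ^ Function.update a j n i = ∏ i ∈ s, p i ^ a i :=
        Finset.prod_congr rfl fun i hi => by rw [Function.update_of_ne (ne_of_mem_of_not_mem hi hj)]
      rw [Finset.prod_insert hj, Function.update_self, hs]
      exact hd₁.mul_mul hd₂

theorem Polynomial.Monic.dvd_iff_eq_of_irreducible {R : Type*} [CommRing R] [IsDomain R]
    {p q : R[X]} (hp : p.Monic) (hq : q.Monic) (hpi : Irreducible p) (hqi : Irreducible q) :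
    p ∣ q ↔ p = q :=
  ⟨fun h => eq_of_monic_of_associated hp hq (hpi.associated_of_dvd hqi h), fun h => h ▸ dvd_rfl⟩

section MonicIrreducibleFamily

variable {K ι : Type*} [Field K] [Fintype ι] {g : ι → K[X]}
  (hg : ∀ i, (g i).Monic ∧ Irreducible (g i)) (hginj : Function.Injective g)
include hg hginj

theorem emultiplicity_prod_pow_of_monic_irreducible (a : ι → ℕ) (j : ι) :
    emultiplicity (g j) (∏ i, g i ^ a i) = a j := by
  classical
  have hj : Prime (g j) := (hg j).2.prime
  rw [Finset.emultiplicity_prod hj, Finset.sum_eq_single j, emultiplicity_pow_self_of_prime hj]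
  · intro i _ hij
    refine emultiplicity_eq_zero.2 fun h => hij ?_
    have := ((hg j).1.dvd_iff_eq_of_irreducible (hg i).1 (hg j).2 (hg i).2).1 (hj.dvd_of_dvd_pow h)
    exact (hginj this).symm
  · simp

theorem prod_pow_injective_of_monic_irreducible :
    Function.Injective fun a : ι → ℕ => ∏ i, g i ^ a i := by
  intro a b hab
  funext j
  have := congrArg (emultiplicity (g j)) hab
  simp only [emultiplicity_prod_pow_of_monic_irreducible hg hginj] at this
  exact_mod_cast this

theorem card_monic_dvd_prod_pow (e : ι → ℕ) (D : Finset K[X])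
    (hD : ∀ d, d ∈ D ↔ d.Monic ∧ d ∣ ∏ i, g i ^ e i) :
    D.card = ∏ i, (e i + 1) := by
  classical
  let φ : (∀ i, Fin (e i + 1)) → K[X] := fun a => ∏ i, g i ^ (a i : ℕ)
  have hmonic : ∀ a, (φ a).Monic := fun a =>
    monic_prod_of_monic _ _ fun i _ => (hg i).1.pow _
  have hD_eq : D = Finset.univ.image φ := by
    ext d
    rw [hD, Finset.mem_image]
    constructor
    · rintro ⟨hdm, hd⟩
      obtain ⟨a, hae, had⟩ := exists_associated_prod_pow_of_dvd_prod_pow e _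
        (fun i _ => (hg i).2.prime) hd
      refine ⟨fun i => ⟨a i, Nat.lt_succ_of_le (hae i)⟩, Finset.mem_univ _, ?_⟩
      exact eq_of_monic_of_associated (hmonic _) hdm had.symm
    · rintro ⟨a, -, rfl⟩
      exact ⟨hmonic a, Finset.prod_dvd_prod_of_dvd _ _ fun i _ =>
        pow_dvd_pow _ (Nat.le_of_lt_succ (a i).isLt)⟩
  have hφ : Function.Injective φ := fun a b hab => funext fun i => Fin.ext <|
    congrFun (prod_pow_injective_of_monic_irreducible hg hginj hab) i
  rw [hD_eq, Finset.card_image_of_injective _ hφ, Finset.card_univ, Fintype.card_pi]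
  simp

end MonicIrreducibleFamily

theorem sum_Icc_pow_div_le_pow {q : ℝ} (hq : 2 ≤ q) (m : ℕ) :
    ∑ d ∈ Finset.Icc 1 m, q ^ d / d ≤ q ^ m := by
  induction m with
  | zero => simp
  | succ m ih =>
    rw [Finset.sum_Icc_succ_top (by omega)]
    rcases Nat.eq_zero_or_pos m with rfl | hm
    · simp
    have hm' : (1 : ℝ) ≤ m := by exact_mod_cast hm
    -- as q ≤ 2 (q - 1) ≤ (m + 1) (q - 1)
    have hlast : q ^ (m + 1) / (m + 1 : ℕ) ≤ q ^ (m + 1) - q ^ m := by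
      rw [div_le_iff₀ (by positivity), pow_succ, Nat.cast_add_one]
      have hqm : 0 ≤ q ^ m := by positivity
      have hq1 : 0 ≤ q - 1 := by linarith
      have hm1 : 0 ≤ (m : ℝ) - 1 := by linarith
      nlinarith [mul_nonneg hqm (mul_nonneg hq1 hm1), mul_nonneg hqm (by linarith : 0 ≤ q - 2)]
    linarith

section FiniteField

variable {K : Type*} [Field K] [Finite K]

theorem prod_dvd_X_pow_card_pow_sub_X (S : Finset K[X]) (d : ℕ)
    (hS : ∀ p ∈ S, p.Monic ∧ Irreducible p ∧ p.natDegree = d) :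
    ∏ p ∈ S, p ∣ X ^ Nat.card K ^ d - X := by
  refine Finset.prod_dvd_of_coprime (fun p hp q hq hpq => ?_) fun p hp => ?_
  · obtain ⟨hpm, hpi, -⟩ := hS p hp
    obtain ⟨hqm, hqi, -⟩ := hS q hq
    exact (hpi.coprime_iff_not_dvd).2 fun h => hpq ((hpm.dvd_iff_eq_of_irreducible hqm hpi hqi).1 h)
  · obtain ⟨-, hpi, rfl⟩ := hS p hp
    exact hpi.natDegree_dvd_iff_dvd_X_pow_card_pow_sub_X.1 dvd_rfl

theorem card_mul_le_of_monic_irreducible_natDegree_eq (S : Finset K[X]) (d : ℕ)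
    (hS : ∀ p ∈ S, p.Monic ∧ Irreducible p ∧ p.natDegree = d) :
    S.card * d ≤ Nat.card K ^ d := by
  rcases Nat.eq_zero_or_pos d with rfl | hd
  · simp
  have hq : 1 < Nat.card K ^ d := Nat.one_lt_pow hd.ne' Finite.one_lt_card
  have hdeg : (∏ p ∈ S, p).natDegree = S.card * d := by
    rw [natDegree_prod_of_monic _ _ fun p hp => (hS p hp).1,
      Finset.sum_congr rfl fun p hp => (hS p hp).2.2, Finset.sum_const, smul_eq_mul]
  rw [← hdeg, ← FiniteField.X_pow_card_sub_X_natDegree_eq K hq]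
  exact natDegree_le_of_dvd (prod_dvd_X_pow_card_pow_sub_X S d hS)
    (FiniteField.X_pow_card_sub_X_ne_zero K hq)

theorem card_le_of_monic_irreducible_natDegree_le
    (S : Finset K[X]) (m : ℕ) (hS : ∀ p ∈ S, p.Monic ∧ Irreducible p ∧ p.natDegree ≤ m) :
    S.card ≤ Nat.card K ^ m := by
  classical
  have hdeg : Set.MapsTo natDegree S (Finset.Icc 1 m) := fun p hp =>
    Finset.mem_Icc.2 ⟨(hS p hp).2.1.natDegree_pos, (hS p hp).2.2⟩
  have hq : (2 : ℝ) ≤ Nat.card K := by exact_mod_cast Finite.one_lt_card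
  suffices (S.card : ℝ) ≤ (Nat.card K : ℝ) ^ m by exact_mod_cast this
  calc (S.card : ℝ) = ∑ d ∈ Finset.Icc 1 m, ((S.filter (natDegree · = d)).card : ℝ) := by
        rw [Finset.card_eq_sum_card_fiberwise hdeg]; push_cast; rfl
    _ ≤ ∑ d ∈ Finset.Icc 1 m, (Nat.card K : ℝ) ^ d / d := by
        refine Finset.sum_le_sum fun d hd => ?_
        have hd : (0 : ℝ) < d := by exact_mod_cast (Finset.mem_Icc.1 hd).1
        rw [le_div_iff₀ hd]
        exact_mod_cast card_mul_le_of_monic_irreducible_natDegree_eq _ d fun p hp => by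
          obtain ⟨hpS, rfl⟩ := Finset.mem_filter.1 hp
          exact ⟨(hS p hpS).1, (hS p hpS).2.1, rfl⟩
    _ ≤ _ := sum_Icc_pow_div_le_pow hq m

theorem card_le_rpow_of_monic_irreducible_natDegree_le
    (S : Finset K[X]) {t : ℝ} (ht : 0 ≤ t)
    (hS : ∀ p ∈ S, p.Monic ∧ Irreducible p ∧ (p.natDegree : ℝ) ≤ t) :
    (S.card : ℝ) ≤ (Nat.card K : ℝ) ^ t := by
  have hq : (1 : ℝ) ≤ Nat.card K := by exact_mod_cast Finite.card_pos
  calc (S.card : ℝ) ≤ (Nat.card K : ℝ) ^ ⌊t⌋₊ := by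
        exact_mod_cast card_le_of_monic_irreducible_natDegree_le S ⌊t⌋₊ fun p hp =>
          ⟨(hS p hp).1, (hS p hp).2.1, Nat.le_floor (hS p hp).2.2⟩
    _ = (Nat.card K : ℝ) ^ (⌊t⌋₊ : ℝ) := (Real.rpow_natCast _ _).symm
    _ ≤ (Nat.card K : ℝ) ^ t := Real.rpow_le_rpow_of_exponent_le hq (Nat.floor_le ht)

end FiniteField

section Estimates

open Real

theorem add_one_div_exp_le_one {x d l : ℝ} (hx : 0 ≤ x) (hld : 1 ≤ l * d) :
    (x + 1) / exp (l * x * d) ≤ 1 := by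
  rw [div_le_one (exp_pos _)]
  calc x + 1 ≤ l * x * d + 1 := by nlinarith
    _ ≤ exp (l * x * d) := add_one_le_exp _

theorem add_one_div_exp_le {x d l : ℝ} (hx : 0 ≤ x) (hd : 0 ≤ d) (hl : 0 ≤ l) :
    (x + 1) / exp (l * x * d) ≤ (x + 1) / (1 + l * x * d) :=
  div_le_div_of_nonneg_left (by positivity) (by positivity)
    (by linarith [add_one_le_exp (l * x * d)])

theorem add_one_div_le_inv {x d l : ℝ} (hx : 0 ≤ x) (hd : 1 ≤ d) (hl : 0 < l) (hl1 : l ≤ 1) :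
    (x + 1) / (1 + l * x * d) ≤ 1 / l := by
  have hd0 : 0 ≤ d := zero_le_one.trans hd
  rw [div_le_div_iff₀ (by positivity) hl]
  nlinarith [mul_nonneg (mul_nonneg hl.le hx) (sub_nonneg.2 hd)]

variable {ι : Type*} {x d : ι → ℝ} {l : ℝ}

theorem Finset.prod_le_prod_filter_of_le_one {R : Type*} [CommMonoidWithZero R] [PartialOrder R]
    [ZeroLEOneClass R] [PosMulMono R] (s : Finset ι) (p : ι → Prop) [DecidablePred p]
    {u v : ι → R} (hu : ∀ i ∈ s, 0 ≤ u i) (huv : ∀ i ∈ s, p i → u i ≤ v i)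
    (hu1 : ∀ i ∈ s, ¬p i → u i ≤ 1) :
    ∏ i ∈ s, u i ≤ ∏ i ∈ s with p i, v i := by
  rw [← s.prod_filter_mul_prod_filter_not p]
  calc (∏ i ∈ s with p i, u i) * ∏ i ∈ s with ¬p i, u i ≤ ∏ i ∈ s with p i, u i :=
        mul_le_of_le_one_right (Finset.prod_nonneg fun i hi => hu i (Finset.mem_of_mem_filter i hi))
          (Finset.prod_le_one (fun i hi => hu i (Finset.mem_of_mem_filter i hi))
            fun i hi => hu1 i (Finset.mem_of_mem_filter i hi) (Finset.mem_filter.1 hi).2)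
    _ ≤ ∏ i ∈ s with p i, v i :=
        Finset.prod_le_prod (fun i hi => hu i (Finset.mem_of_mem_filter i hi))
          fun i hi => huv i (Finset.mem_of_mem_filter i hi) (Finset.mem_filter.1 hi).2

theorem prod_add_one_div_exp_le (s : Finset ι) [DecidablePred fun i => d i ≤ 1 / l]
    (hx : ∀ i ∈ s, 0 ≤ x i) (hd : ∀ i ∈ s, 0 ≤ d i) (hl : 0 < l) :
    ∏ i ∈ s, (x i + 1) / exp (l * x i * d i) ≤
      ∏ i ∈ s with d i ≤ 1 / l, (x i + 1) / (1 + l * x i * d i) := by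
  refine s.prod_le_prod_filter_of_le_one _ (fun i hi => by have := hx i hi; positivity)
    (fun i hi _ => add_one_div_exp_le (hx i hi) (hd i hi) hl.le) fun i hi hdl => ?_
  refine add_one_div_exp_le_one (hx i hi) ?_
  rw [not_le, div_lt_iff₀ hl] at hdl
  linarith

theorem prod_add_one_div_le_exp_mul_log (s : Finset ι) {N : ℝ} (hx : ∀ i ∈ s, 0 ≤ x i)
    (hd : ∀ i ∈ s, 1 ≤ d i) (hl : 0 < l) (hl1 : l ≤ 1) (hN : (s.card : ℝ) ≤ N) :
    ∏ i ∈ s, (x i + 1) / (1 + l * x i * d i) ≤ exp (N * log (1 / l)) := by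
  have hl' : 1 ≤ 1 / l := by rw [le_div_iff₀ hl]; linarith
  calc ∏ i ∈ s, (x i + 1) / (1 + l * x i * d i) ≤ ∏ _i ∈ s, 1 / l :=
        Finset.prod_le_prod (fun i hi => by have := hx i hi; have := hd i hi; positivity)
          fun i hi => add_one_div_le_inv (hx i hi) (hd i hi) hl hl1
    _ = (1 / l) ^ (s.card : ℝ) := by rw [Finset.prod_const, rpow_natCast]
    _ ≤ (1 / l) ^ N := rpow_le_rpow_of_exponent_le hl' hN
    _ = exp (N * log (1 / l)) := by rw [rpow_def_of_pos (by positivity), mul_comm]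

end Estimates

open scoped Classical in
theorem tau_factorization_bound_general
    (Fq : Type) [Field Fq] [Fintype Fq]
    (k : ℕ) (g : Fin k → Polynomial Fq) (e : Fin k → ℕ)
    (hg : ∀ i, (g i).Monic ∧ Irreducible (g i))
    (hginj : Function.Injective g)
    (f : Polynomial Fq) (hf : f = ∏ i, g i ^ e i)
    (D : Finset (Polynomial Fq)) (hD : ∀ d, d ∈ D ↔ d.Monic ∧ d ∣ f)
    (l : ℝ) (hl : 0 < l) :
    (D.card : ℝ) / Real.exp (l * (f.natDegree : ℝ)) ≤
      (∏ i ∈ Finset.univ.filter (fun i => ((g i).natDegree : ℝ) ≤ 1 / l),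
        ((e i : ℝ) + 1) / (1 + l * (e i : ℝ) * ((g i).natDegree : ℝ))) ∧
    (l < 1 →
      (D.card : ℝ) ≤ Real.exp (l * (f.natDegree : ℝ)) *
        Real.exp ((Fintype.card Fq : ℝ) ^ ((1 : ℝ) / l) * Real.log (1 / l))) := by
  have hcard : (D.card : ℝ) = ∏ i, ((e i : ℝ) + 1) := by
    rw [card_monic_dvd_prod_pow hg hginj e D (hf ▸ hD)]
    push_cast
    rfl
  have hexp : Real.exp (l * f.natDegree) = ∏ i, Real.exp (l * e i * (g i).natDegree) := by
    rw [← Real.exp_sum, hf, natDegree_prod_of_monic _ _ fun i _ => (hg i).1.pow _]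
    simp only [natDegree_pow, Nat.cast_sum, Nat.cast_mul, Finset.mul_sum, mul_assoc]
  have hmain := prod_add_one_div_exp_le (x := fun i => (e i : ℝ))
    (d := fun i => ((g i).natDegree : ℝ)) Finset.univ (fun i _ => by positivity)
    (fun i _ => by positivity) hl
  rw [Finset.prod_div_distrib, ← hcard, ← hexp] at hmain
  refine ⟨hmain, fun hl1 => ?_⟩
  set F := Finset.univ.filter fun i => ((g i).natDegree : ℝ) ≤ 1 / l
  have hF : (F.card : ℝ) ≤ (Fintype.card Fq : ℝ) ^ ((1 : ℝ) / l) := by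
    rw [← Finset.card_image_of_injective F hginj, ← Nat.card_eq_fintype_card]
    refine card_le_rpow_of_monic_irreducible_natDegree_le _ (by positivity) fun p hp => ?_
    obtain ⟨i, hi, rfl⟩ := Finset.mem_image.1 hp
    exact ⟨(hg i).1, (hg i).2, (Finset.mem_filter.1 hi).2⟩
  have hprod := prod_add_one_div_le_exp_mul_log (x := fun i => (e i : ℝ))
    (d := fun i => ((g i).natDegree : ℝ)) F (fun i _ => by positivity)
    (fun i _ => by exact_mod_cast (hg i).2.natDegree_pos) hl hl1.le hF
  rw [div_le_iff₀ (Real.exp_pos _)] at hmain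
  linarith [mul_le_mul_of_nonneg_right hprod (Real.exp_pos (l * f.natDegree)).le]

open scoped Classical in
/-- If `f = g₁^{e₁} ⋯ g_k^{e_k}` with distinct monic irreducibles `gᵢ`, then for
`λ > 0`, `τ(f)/exp(λ·deg f) ≤ ∏_{i : deg gᵢ ≤ 1/λ} (eᵢ+1)/(1+λ eᵢ deg gᵢ)`, and for
`0 < λ < 1`, `τ(f) ≤ exp(λ·deg f)·exp(q^{1/λ}·log(1/λ))`. -/
theorem tau_factorization_bound
    (Fq : Type) [Field Fq] [Fintype Fq]
    (k : ℕ) (g : Fin k → Polynomial Fq) (e : Fin k → ℕ)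
    (hg : ∀ i, (g i).Monic ∧ Irreducible (g i))
    (hginj : Function.Injective g)
    (he : ∀ i, 1 ≤ e i)
    (f : Polynomial Fq) (hf : f = ∏ i, g i ^ e i)
    (D : Finset (Polynomial Fq)) (hD : ∀ d, d ∈ D ↔ d.Monic ∧ d ∣ f)
    (l : ℝ) (hl : 0 < l) :
    (D.card : ℝ) / Real.exp (l * (f.natDegree : ℝ)) ≤
      (∏ i ∈ Finset.univ.filter (fun i => ((g i).natDegree : ℝ) ≤ 1 / l),
        ((e i : ℝ) + 1) / (1 + l * (e i : ℝ) * ((g i).natDegree : ℝ))) ∧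
    (l < 1 →
      (D.card : ℝ) ≤ Real.exp (l * (f.natDegree : ℝ)) *
        Real.exp ((Fintype.card Fq : ℝ) ^ ((1 : ℝ) / l) * Real.log (1 / l))) :=
  tau_factorization_bound_general Fq k g e hg hginj f hf D hD l hl
end

section
/- The number π_q(n) of monic irreducible polynomials of degree n over F_q satisfies q^n/n − 2·q^{n/2}/n ≤ π_q(n) ≤ q^n/n for all n ≥ 1. -/
/-!
The monic irreducible polynomials over `𝔽_q` whose degree divides `n` are exactly the distinct
monic irreducible factors of the squarefree polynomial `X ^ q ^ n - X`; comparing degrees gives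
Gauss's formula `∑_{d ∣ n} d π_q(d) = q ^ n`. The term `d = n` yields the upper bound, and the
proper divisors, all at most `n / 2`, contribute at most `∑_{d ≤ n/2} q ^ d ≤ 2 q ^ (n/2)`.
-/

open Polynomial UniqueFactorizationMonoid Finset

theorem Nat.sum_Icc_pow_le_two_mul_pow {q : ℕ} (hq : 2 ≤ q) (m : ℕ) :
    ∑ d ∈ Icc 1 m, q ^ d ≤ 2 * q ^ m := by
  induction m with
  | zero => simp
  | succ m ih =>
    rw [sum_Icc_succ_top (by omega), pow_succ]
    have := Nat.mul_le_mul_left (q ^ m) hq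
    lia

theorem Nat.le_div_two_of_mem_properDivisors {d n : ℕ} (h : d ∈ n.properDivisors) :
    d ≤ n / 2 := by
  obtain ⟨hdvd, hlt⟩ := Nat.mem_properDivisors.mp h
  calc d = n / (n / d) := (Nat.div_div_self hdvd (by omega)).symm
    _ ≤ n / 2 := Nat.div_le_div_left (Nat.one_lt_div_of_mem_properDivisors h) two_pos

theorem Polynomial.sum_natDegree_toFinset_normalizedFactors {K : Type*} [Field K]
    [DecidableEq K] {f : K[X]} (hf : Squarefree f) :
    ∑ g ∈ (normalizedFactors f).toFinset, g.natDegree = f.natDegree := by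
  have hnodup : (normalizedFactors f).Nodup :=
    (squarefree_iff_nodup_normalizedFactors hf.ne_zero).mp hf
  have hmonic : ∀ g ∈ normalizedFactors f, g.Monic := fun g hg =>
    ((Polynomial.mem_normalizedFactors_iff hf.ne_zero).mp hg).2.1
  conv_rhs => rw [← leadingCoeff_mul_prod_normalizedFactors f]
  rw [natDegree_C_mul (leadingCoeff_ne_zero.mpr hf.ne_zero),
    natDegree_multiset_prod_of_monic _ hmonic, sum_eq_multiset_sum,
    Multiset.toFinset_val, hnodup.dedup]

namespace FiniteField

variable (K : Type*) [Field K] [Fintype K]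

theorem squarefree_X_pow_card_pow_sub_X {n : ℕ} (hn : n ≠ 0) :
    Squarefree (X ^ Fintype.card K ^ n - X : K[X]) :=
  have : CharP K (ringChar K) := ringChar.charP K
  (galois_poly_separable (ringChar K) _
    (dvd_pow (ringChar.dvd (cast_card_eq_zero K)) hn)).squarefree

variable [DecidableEq K]

/- For `n = 0` this is empty, since `X ^ q ^ 0 - X = 0`, so the characterization
`mem_monicIrreducibleOfNatDegreeDvd` needs `n ≠ 0`. -/
noncomputable def monicIrreducibleOfNatDegreeDvd (n : ℕ) : Finset K[X] :=
  (normalizedFactors (X ^ Fintype.card K ^ n - X : K[X])).toFinset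

noncomputable def monicIrreducibleOfNatDegree (n : ℕ) : Finset K[X] :=
  {g ∈ monicIrreducibleOfNatDegreeDvd K n | g.natDegree = n}

variable {K}

theorem mem_monicIrreducibleOfNatDegreeDvd {n : ℕ} (hn : n ≠ 0) {g : K[X]} :
    g ∈ monicIrreducibleOfNatDegreeDvd K n ↔
      g.Monic ∧ Irreducible g ∧ g.natDegree ∣ n := by
  rw [monicIrreducibleOfNatDegreeDvd, Multiset.mem_toFinset,
    Polynomial.mem_normalizedFactors_iff (X_pow_card_pow_sub_X_ne_zero K hn Fintype.one_lt_card),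
    ← Nat.card_eq_fintype_card]
  constructor
  · rintro ⟨hirr, hmonic, hdvd⟩
    exact ⟨hmonic, hirr, hirr.natDegree_dvd_of_dvd_X_pow_card_pow_sub_X hdvd⟩
  · rintro ⟨hmonic, hirr, hdeg⟩
    exact ⟨hirr, hmonic, hirr.natDegree_dvd_iff_dvd_X_pow_card_pow_sub_X.mp hdeg⟩

theorem mem_monicIrreducibleOfNatDegree {n : ℕ} (hn : n ≠ 0) {g : K[X]} :
    g ∈ monicIrreducibleOfNatDegree K n ↔ g.Monic ∧ Irreducible g ∧ g.natDegree = n := by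
  rw [monicIrreducibleOfNatDegree, mem_filter, mem_monicIrreducibleOfNatDegreeDvd hn]
  constructor
  · rintro ⟨⟨hmonic, hirr, -⟩, hdeg⟩
    exact ⟨hmonic, hirr, hdeg⟩
  · rintro ⟨hmonic, hirr, hdeg⟩
    exact ⟨⟨hmonic, hirr, hdeg.dvd⟩, hdeg⟩

theorem sum_natDegree_monicIrreducibleOfNatDegreeDvd {n : ℕ} (hn : n ≠ 0) :
    ∑ g ∈ monicIrreducibleOfNatDegreeDvd K n, g.natDegree = Fintype.card K ^ n := by
  rw [monicIrreducibleOfNatDegreeDvd,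
    sum_natDegree_toFinset_normalizedFactors (squarefree_X_pow_card_pow_sub_X K hn),
    X_pow_card_pow_sub_X_natDegree_eq K hn Fintype.one_lt_card]

theorem mul_card_monicIrreducibleOfNatDegree_add_sum_natDegree {n : ℕ} (hn : n ≠ 0) :
    n * #(monicIrreducibleOfNatDegree K n) +
        ∑ g ∈ monicIrreducibleOfNatDegreeDvd K n with g.natDegree ≠ n, g.natDegree =
      Fintype.card K ^ n := by
  rw [← sum_natDegree_monicIrreducibleOfNatDegreeDvd hn,
    ← sum_filter_add_sum_filter_not (monicIrreducibleOfNatDegreeDvd K n) (·.natDegree = n)]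
  congr 1
  rw [sum_const_nat fun g hg => (mem_filter.mp hg).2, mul_comm]
  rfl

theorem sum_natDegree_filter_natDegree_ne_le {n : ℕ} (hn : n ≠ 0) :
    ∑ g ∈ monicIrreducibleOfNatDegreeDvd K n with g.natDegree ≠ n, g.natDegree ≤
      2 * Fintype.card K ^ (n / 2) := by
  set T := {g ∈ monicIrreducibleOfNatDegreeDvd K n | g.natDegree ≠ n}
  have hmem : ∀ g ∈ T, g.Monic ∧ Irreducible g ∧ g.natDegree ∈ n.properDivisors := by
    intro g hg
    obtain ⟨hg, hne⟩ := mem_filter.mp hg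
    obtain ⟨hmonic, hirr, hdvd⟩ := (mem_monicIrreducibleOfNatDegreeDvd hn).mp hg
    exact ⟨hmonic, hirr, Nat.mem_properDivisors.mpr
      ⟨hdvd, (Nat.le_of_dvd (Nat.pos_of_ne_zero hn) hdvd).lt_of_ne hne⟩⟩
  have hfiber (d : ℕ) (hd : d ≠ 0) :
      {g ∈ T | g.natDegree = d} ⊆ monicIrreducibleOfNatDegreeDvd K d := by
    intro g hg
    obtain ⟨hgT, rfl⟩ := mem_filter.mp hg
    obtain ⟨hmonic, hirr, -⟩ := hmem g hgT
    exact (mem_monicIrreducibleOfNatDegreeDvd hd).mpr ⟨hmonic, hirr, dvd_rfl⟩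
  calc ∑ g ∈ T, g.natDegree
      = ∑ d ∈ n.properDivisors, ∑ g ∈ T with g.natDegree = d, g.natDegree :=
        (sum_fiberwise_of_maps_to (fun g hg => (hmem g hg).2.2) _).symm
    _ ≤ ∑ d ∈ n.properDivisors, ∑ g ∈ monicIrreducibleOfNatDegreeDvd K d, g.natDegree :=
        sum_le_sum fun d hd =>
          sum_le_sum_of_subset (hfiber d (Nat.pos_of_mem_properDivisors hd).ne')
    _ = ∑ d ∈ n.properDivisors, Fintype.card K ^ d :=
        sum_congr rfl fun d hd =>
          sum_natDegree_monicIrreducibleOfNatDegreeDvd (Nat.pos_of_mem_properDivisors hd).ne'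
    _ ≤ ∑ d ∈ Icc 1 (n / 2), Fintype.card K ^ d :=
        sum_le_sum_of_subset fun d hd => mem_Icc.mpr
          ⟨Nat.pos_of_mem_properDivisors hd, Nat.le_div_two_of_mem_properDivisors hd⟩
    _ ≤ 2 * Fintype.card K ^ (n / 2) :=
        Nat.sum_Icc_pow_le_two_mul_pow Fintype.one_lt_card _

theorem mul_card_monicIrreducibleOfNatDegree_le {n : ℕ} (hn : n ≠ 0) :
    n * #(monicIrreducibleOfNatDegree K n) ≤ Fintype.card K ^ n := by
  have := mul_card_monicIrreducibleOfNatDegree_add_sum_natDegree (K := K) hn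
  omega

theorem card_pow_le_mul_card_monicIrreducibleOfNatDegree_add {n : ℕ} (hn : n ≠ 0) :
    Fintype.card K ^ n ≤
      n * #(monicIrreducibleOfNatDegree K n) + 2 * Fintype.card K ^ (n / 2) := by
  have := mul_card_monicIrreducibleOfNatDegree_add_sum_natDegree (K := K) hn
  have := sum_natDegree_filter_natDegree_ne_le (K := K) hn
  omega

end FiniteField

theorem Real.natCast_pow_div_two_le_rpow {q : ℕ} (hq : q ≠ 0) (n : ℕ) :
    (q : ℝ) ^ (n / 2) ≤ (q : ℝ) ^ ((n : ℝ) / 2) := by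
  rw [← Real.rpow_natCast]
  exact Real.rpow_le_rpow_of_exponent_le (mod_cast Nat.one_le_iff_ne_zero.mpr hq)
    (by simpa using Nat.cast_div_le (m := n) (n := 2))

open FiniteField in
/-- The number `π_q(n)` of monic irreducible polynomials of degree `n` over `F_q`
satisfies `q^n/n − 2·q^{n/2}/n ≤ π_q(n) ≤ q^n/n` for all `n ≥ 1`. -/
theorem irreducible_polynomial_count
    (Fq : Type) [Field Fq] [Fintype Fq] (n : ℕ) (hn : 1 ≤ n)
    (P : Finset (Polynomial Fq))
    (hP : ∀ w, w ∈ P ↔ w.Monic ∧ Irreducible w ∧ w.natDegree = n) :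
    (Fintype.card Fq : ℝ) ^ n / n -
        2 * (Fintype.card Fq : ℝ) ^ ((n : ℝ) / 2) / n ≤ (P.card : ℝ) ∧
      (P.card : ℝ) ≤ (Fintype.card Fq : ℝ) ^ n / n := by
  classical
  have hn0 : n ≠ 0 := by omega
  have hPeq : P = monicIrreducibleOfNatDegree Fq n := by
    ext w
    rw [hP, mem_monicIrreducibleOfNatDegree hn0]
  have hupper : (n : ℝ) * P.card ≤ Fintype.card Fq ^ n :=
    mod_cast hPeq ▸ mul_card_monicIrreducibleOfNatDegree_le hn0
  have hlower : (Fintype.card Fq : ℝ) ^ n ≤ n * P.card + 2 * Fintype.card Fq ^ (n / 2) :=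
    mod_cast hPeq ▸ card_pow_le_mul_card_monicIrreducibleOfNatDegree_add hn0
  have hpow := Real.natCast_pow_div_two_le_rpow (Fintype.card_ne_zero (α := Fq)) n
  have hnpos : (0 : ℝ) < n := mod_cast Nat.pos_of_ne_zero hn0
  constructor
  · rw [← sub_div, div_le_iff₀ hnpos]
    linarith
  · rw [le_div_iff₀ hnpos]
    linarith
end

section
/- For any monic polynomials b and g over F_q and any ℓ ≥ 0: ∑_{χ mod R_{ℓ,g}} |∑*_{a mod R_{ℓ,g}, a ≡ b mod R_ℓ} χ(a)·e(a/g)|² = q^ℓ · Φ(g)², where the inner sum is over invertible residues a modulo R_{ℓ,g} whose first ℓ coefficients agree with those of b. -/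
open Polynomial

/-- The coefficient of `t^{-1}` in the Laurent expansion at infinity of `u/g`
(for `g` monic): it equals the coefficient of `t^{deg g − 1}` in `u mod g`. -/
noncomputable def resCoeff {Fq : Type} [Field Fq] (u g : Polynomial Fq) : Fq :=
  (u % g).coeff (g.natDegree - 1)

/-- The standard additive character `e(ξ) = exp(2πi·tr(x_{-1})/p)` evaluated on a
`t^{-1}`-coefficient `x ∈ F_q`. -/
noncomputable def eChar {Fq : Type} [Field Fq] [Fintype Fq] (p : ℕ)
    [Algebra (ZMod p) Fq] (x : Fq) : ℂ :=
  Complex.exp (2 * Real.pi * Complex.I *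
    ((Algebra.trace (ZMod p) Fq x).val : ℂ) / p)

/-- A (multiplicative) character modulo the relation `R_{ℓ,g}`, as a function on
polynomials. -/
def IsCharModR {Fq : Type} [Field Fq] (ℓ : ℕ) (g : Polynomial Fq)
    (χ : Polynomial Fq → ℂ) : Prop :=
  (∀ f : Polynomial Fq, ¬ f.Monic → χ f = 0) ∧
  (∀ f : Polynomial Fq, f.Monic → ¬ IsCoprime f g → χ f = 0) ∧
  (∀ f : Polynomial Fq, f.Monic → IsCoprime f g → χ f ≠ 0) ∧
  (∀ f h : Polynomial Fq, f.Monic → h.Monic → χ (f * h) = χ f * χ h) ∧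
  (∀ f h : Polynomial Fq, f.Monic → h.Monic → g ∣ (f - h) →
    (X : Polynomial Fq) ^ (ℓ + 1) ∣ (f.reverse - h.reverse) → χ f = χ h)

/-!
The characters modulo `R_{ℓ,g}` are exactly the characters of the finite abelian group
`G = (𝔽_q[t]/(g))ˣ × {u ∈ (𝔽_q[t]/(t^{ℓ+1}))ˣ : u(0) = 1}`, pulled back along
`f ↦ (f mod g, f.reverse mod t^{ℓ+1})` on monic `f` prime to `g`. This map is onto, because the
top `ℓ + 1` coefficients of a monic polynomial of large degree and its residue modulo `g` can be
chosen independently. Expanding the square and using orthogonality of the characters of `G`,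
the left-hand side becomes `#G · #A`, since `|e| = 1` and distinct elements of `A` have distinct
images in `G`. Finally `#G = Φ(g) q^ℓ`, and `#A = Φ(g)` because `A` meets every invertible class
modulo `g` exactly once.
-/

open Finset AdjoinRoot

theorem norm_eChar {Fq : Type} [Field Fq] [Fintype Fq] (p : ℕ) [Algebra (ZMod p) Fq] (x : Fq) :
    ‖eChar p x‖ = 1 := by
  rw [eChar, Complex.norm_exp]
  simp

section Characters

variable {G : Type*} [CommGroup G] [Finite G]

theorem conj_monoidHom_apply (ψ : G →* ℂˣ) (γ : G) :
    starRingEnd ℂ (ψ γ : ℂ) = ψ γ⁻¹ := by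
  have hpow : (ψ γ : ℂ) ^ Nat.card G = 1 := by
    rw [← Units.val_pow_eq_pow_val, ← map_pow, pow_card_eq_one', map_one, Units.val_one]
  rw [← Complex.inv_eq_conj (Complex.norm_eq_one_of_pow_eq_one hpow Nat.card_pos.ne'), map_inv,
    Units.val_inv_eq_inv_val]

variable [Fintype (G →* ℂˣ)]

theorem sum_monoidHom_apply_eq_ite [DecidableEq G] (γ : G) :
    ∑ ψ : G →* ℂˣ, (ψ γ : ℂ) = if γ = 1 then (Nat.card G : ℂ) else 0 := by
  split_ifs with hγ
  · simp [hγ, ← Nat.card_eq_fintype_card, CommGroup.card_monoidHom_of_hasEnoughRootsOfUnity]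
  · obtain ⟨φ, hφ⟩ := CommGroup.exists_apply_ne_one_of_hasEnoughRootsOfUnity G ℂ hγ
    refine eq_zero_of_mul_eq_self_left (Units.val_eq_one.not.mpr hφ) ?_
    simp only [Finset.mul_sum, ← Units.val_mul, ← MonoidHom.mul_apply]
    exact Fintype.sum_bijective _ (Group.mulLeft_bijective φ) _ _ fun _ ↦ rfl

theorem sum_norm_sq_sum_monoidHom_apply_mul {ι : Type*} {A : Finset ι} {s : ι → G}
    (hs : Set.InjOn s A) (w : ι → ℂ) :
    ∑ ψ : G →* ℂˣ, ‖∑ a ∈ A, (ψ (s a) : ℂ) * w a‖ ^ 2 =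
      Nat.card G * ∑ a ∈ A, ‖w a‖ ^ 2 := by
  classical
  apply Complex.ofReal_injective
  push_cast
  calc ∑ ψ : G →* ℂˣ, (‖∑ a ∈ A, (ψ (s a) : ℂ) * w a‖ : ℂ) ^ 2
      = ∑ a ∈ A, ∑ a' ∈ A, w a * starRingEnd ℂ (w a') *
          ∑ ψ : G →* ℂˣ, (ψ (s a * (s a')⁻¹) : ℂ) := by
        simp_rw [← Complex.ofReal_pow, Complex.sq_norm, ← Complex.mul_conj, map_sum, map_mul,
          conj_monoidHom_apply, sum_mul_sum, Finset.mul_sum]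
        rw [Finset.sum_comm]
        refine Finset.sum_congr rfl fun a _ ↦ ?_
        rw [Finset.sum_comm]
        refine Finset.sum_congr rfl fun a' _ ↦ Finset.sum_congr rfl fun ψ _ ↦ ?_
        rw [Units.val_mul]
        ring
    _ = ∑ a ∈ A, w a * starRingEnd ℂ (w a) * Nat.card G := by
        refine Finset.sum_congr rfl fun a ha ↦ ?_
        simp_rw [sum_monoidHom_apply_eq_ite, mul_inv_eq_one]
        rw [Finset.sum_eq_single a
          (fun a' ha' hne ↦ by rw [if_neg fun h ↦ hne (hs ha ha' h).symm, mul_zero])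
          (fun h ↦ absurd ha h), if_pos rfl]
    _ = Nat.card G * ∑ a ∈ A, (‖w a‖ : ℂ) ^ 2 := by
        rw [Finset.mul_sum]
        refine Finset.sum_congr rfl fun a _ ↦ ?_
        rw [Complex.mul_conj, ← Complex.sq_norm]
        push_cast
        ring

end Characters

theorem MonoidHom.exists_comp_eq_of_surjective {M G N : Type*} [Monoid M] [Monoid G]
    [Monoid N] {θ : M →* G} (hθ : Function.Surjective θ) (χ : M →* N)
    (hχ : ∀ m m', θ m = θ m' → χ m = χ m') :
    ∃ ψ : G →* N, ψ.comp θ = χ := by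
  refine ⟨(Con.lift (Con.ker θ) χ hχ).comp
    (Con.quotientKerEquivOfSurjective θ hθ).symm.toMonoidHom, MonoidHom.ext fun m ↦ ?_⟩
  have : (Con.quotientKerEquivOfSurjective θ hθ).symm (θ m) = m :=
    (MulEquiv.symm_apply_eq _).mpr rfl
  simp only [MonoidHom.comp_apply, MulEquiv.coe_toMonoidHom, this]
  rfl

theorem isCoprime_iff_of_dvd_sub {R : Type*} [CommRing R] {x x' y : R} (h : y ∣ x - x') :
    IsCoprime x y ↔ IsCoprime x' y := by
  obtain ⟨c, hc⟩ := h
  rw [show x = x' + y * c by linear_combination hc, IsCoprime.add_mul_left_left_iff]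

namespace AdjoinRoot

variable {R : Type*} [CommRing R] {f g : R[X]}

theorem isUnit_mk_iff_isCoprime : IsUnit (mk g f) ↔ IsCoprime f g := by
  constructor
  · rintro ⟨u, hu⟩
    obtain ⟨y, hy⟩ := mk_surjective (↑u⁻¹ : AdjoinRoot g)
    obtain ⟨c, hc⟩ := mk_eq_mk.mp (show mk g (f * y) = mk g 1 by
      rw [map_mul, map_one, ← hu, hy, Units.mul_inv])
    exact ⟨y, -c, by linear_combination hc⟩
  · rintro ⟨u, v, h⟩
    refine .of_mul_eq_one (mk g u) ?_
    rw [← map_mul, mul_comm, ← sub_eq_zero, ← map_one (mk g), ← map_sub, mk_eq_zero]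
    exact ⟨-v, by linear_combination h⟩

theorem natCard_units [IsDomain R] (hg : g.Monic) :
    Nat.card {x : R[X] // x.degree < g.degree ∧ IsCoprime x g} = Nat.card (AdjoinRoot g)ˣ := by
  refine Nat.card_eq_of_bijective (fun x ↦ (isUnit_mk_iff_isCoprime.mpr x.2.2).unit)
    ⟨fun x y hxy ↦ Subtype.ext (sub_eq_zero.mp (eq_zero_of_dvd_of_degree_lt
      (mk_eq_mk.mp (congrArg Units.val hxy)) ((degree_sub_le _ _).trans_lt (max_lt x.2.1 y.2.1)))),
      fun α ↦ ?_⟩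
  obtain ⟨p, hp⟩ := mk_surjective (α : AdjoinRoot g)
  have hmod : mk g (p %ₘ g) = α := by rw [← modByMonicHom_mk hg, mk_leftInverse hg, hp]
  exact ⟨⟨p %ₘ g, degree_modByMonic_lt p hg,
    isUnit_mk_iff_isCoprime.mp (hmod ▸ α.isUnit)⟩, Units.ext hmod⟩

theorem finite_of_monic [Finite R] (hg : g.Monic) : Finite (AdjoinRoot g) :=
  have := hg.finite_adjoinRoot
  Module.finite_of_finite R

end AdjoinRoot

section Lift

variable {R : Type*} [CommRing R] [Nontrivial R]

theorem exists_monic_dvd_sub_and_X_pow_dvd_reverse_sub (ℓ : ℕ) {g : R[X]} (hg : g.Monic)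
    (x u : R[X]) (hu : u.coeff 0 = 1) :
    ∃ f : R[X], f.Monic ∧ g ∣ f - x ∧ X ^ (ℓ + 1) ∣ f.reverse - u := by
  -- `W` has the prescribed top coefficients in degree `n = deg g + ℓ`; adding `(x - W) %ₘ g`,
  -- of degree `< deg g`, fixes the residue modulo `g` without touching them.
  set n := g.natDegree + ℓ
  set W : R[X] := ∑ i ∈ range (ℓ + 1), monomial (n - i) (u.coeff i)
  set f := W + (x - W) %ₘ g
  have hWcoeff : ∀ i ≤ ℓ, W.coeff (n - i) = u.coeff i := fun i hi ↦ by
    rw [finsetSum_coeff, sum_eq_single i (fun j hj hji ↦ ?_) (by simp; omega), coeff_monomial,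
      if_pos rfl]
    rw [coeff_monomial, if_neg]
    simp only [mem_range] at hj
    omega
  have hr : ((x - W) %ₘ g).degree < g.natDegree := by
    rw [← degree_eq_natDegree hg.ne_zero]; exact degree_modByMonic_lt _ hg
  have hfcoeff : ∀ i ≤ ℓ, f.coeff (n - i) = u.coeff i := fun i hi ↦ by
    rw [coeff_add, hWcoeff i hi, coeff_eq_zero_of_degree_lt (hr.trans_le (by norm_cast; omega)),
      add_zero]
  have hfdeg : f.natDegree ≤ n := by
    refine natDegree_add_le_of_degree_le (natDegree_sum_le_of_forall_le _ _ fun i _ ↦ ?_) ?_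
    · exact (natDegree_monomial_le _).trans (by omega)
    · exact natDegree_le_iff_degree_le.mpr (hr.le.trans (by norm_cast; omega))
  have hfn : f.coeff n = 1 := by simpa [hu] using hfcoeff 0 (Nat.zero_le ℓ)
  have hf : f.Monic := monic_of_natDegree_le_of_coeff_eq_one n hfdeg hfn
  refine ⟨f, hf, ⟨-((x - W) /ₘ g), ?_⟩, X_pow_dvd_iff.mpr fun i hi ↦ ?_⟩
  · linear_combination modByMonic_eq_sub_mul_div (x - W) g
  · rw [coeff_sub, coeff_reverse, natDegree_eq_of_le_of_coeff_ne_zero hfdeg (by simp [hfn]),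
      revAt_le (by omega), hfcoeff i (by omega), sub_self]

end Lift

section OneUnits

variable (F : Type*) [Field F] (ℓ : ℕ)

abbrev TruncatedPoly : Type _ := AdjoinRoot (X ^ (ℓ + 1) : F[X])

noncomputable def constantCoeffMod : TruncatedPoly F ℓ →+* F :=
  AdjoinRoot.lift (RingHom.id F) 0 (by simp)

noncomputable def oneUnits : Subgroup (TruncatedPoly F ℓ)ˣ :=
  (Units.map (constantCoeffMod F ℓ : TruncatedPoly F ℓ →* F)).ker

variable {F ℓ}

@[simp]
theorem constantCoeffMod_mk (p : F[X]) : constantCoeffMod F ℓ (mk _ p) = p.coeff 0 := by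
  simp [constantCoeffMod, lift_mk, eval₂_at_zero]

theorem isUnit_mk_X_pow_of_coeff_zero_ne_zero {p : F[X]} (hp : p.coeff 0 ≠ 0) :
    IsUnit (mk (X ^ (ℓ + 1)) p) :=
  isUnit_mk_iff_isCoprime.mpr
    ((irreducible_X.coprime_iff_not_dvd.mpr (by rwa [X_dvd_iff])).pow_left.symm)

noncomputable def oneUnitsMk (p : F[X]) (hp : p.coeff 0 = 1) : oneUnits F ℓ :=
  ⟨(isUnit_mk_X_pow_of_coeff_zero_ne_zero (hp ▸ one_ne_zero)).unit, by
    ext; simp [hp]⟩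

@[simp]
theorem coe_oneUnitsMk (p : F[X]) (hp : p.coeff 0 = 1) :
    ((oneUnitsMk (ℓ := ℓ) p hp : (TruncatedPoly F ℓ)ˣ) : TruncatedPoly F ℓ) = mk _ p := rfl

theorem coeff_zero_eq_one_of_mk_eq {κ : oneUnits F ℓ} {p : F[X]}
    (hp : mk _ p = ((κ : (TruncatedPoly F ℓ)ˣ) : TruncatedPoly F ℓ)) : p.coeff 0 = 1 := by
  rw [← constantCoeffMod_mk (ℓ := ℓ), hp]
  exact congrArg Units.val κ.2

theorem natCard_oneUnits [Finite F] : Nat.card (oneUnits F ℓ) = Nat.card F ^ ℓ := by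
  let e : degreeLT F ℓ → oneUnits F ℓ := fun v ↦ oneUnitsMk (1 + X * (v : F[X])) (by simp)
  have he : Function.Bijective e := by
    refine ⟨fun v v' hvv' ↦ ?_, fun κ ↦ ?_⟩
    · have h := mk_eq_mk.mp (Units.ext_iff.mp (Subtype.ext_iff.mp hvv'))
      rw [add_sub_add_left_eq_sub, ← mul_sub, pow_succ', mul_dvd_mul_iff_left X_ne_zero] at h
      refine Subtype.ext (sub_eq_zero.mp (eq_zero_of_dvd_of_degree_lt h ?_))
      rw [degree_X_pow]
      exact (degree_sub_le _ _).trans_lt (max_lt (mem_degreeLT.mp v.2) (mem_degreeLT.mp v'.2))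
    · obtain ⟨p, hp⟩ := mk_surjective ((κ : (TruncatedPoly F ℓ)ˣ) : TruncatedPoly F ℓ)
      refine ⟨⟨p.divX %ₘ X ^ ℓ, mem_degreeLT.mpr ?_⟩, Subtype.ext (Units.ext ?_)⟩
      · simpa using degree_modByMonic_lt p.divX (monic_X_pow ℓ)
      · rw [coe_oneUnitsMk, ← hp, mk_eq_mk]
        refine ⟨-(p.divX /ₘ X ^ ℓ), ?_⟩
        have := divX_mul_X_add p
        rw [coeff_zero_eq_one_of_mk_eq hp, C_1] at this
        linear_combination (X : F[X]) * modByMonic_eq_sub_mul_div p.divX (X ^ ℓ) + this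
  rw [← Nat.card_eq_of_bijective e he, Nat.card_congr (degreeLTEquiv F ℓ).toEquiv,
    Nat.card_fun, Nat.card_eq_fintype_card (α := Fin ℓ), Fintype.card_fin]

end OneUnits

section ResidueGroup

variable {F : Type*} [Field F]

def monicCoprime (g : F[X]) : Submonoid F[X] where
  carrier := {f | f.Monic ∧ IsCoprime f g}
  mul_mem' hf hh := ⟨hf.1.mul hh.1, hf.2.mul_left hh.2⟩
  one_mem' := ⟨monic_one, isCoprime_one_left⟩

variable (ℓ : ℕ) (g : F[X])

abbrev ResidueGroup : Type _ := (AdjoinRoot g)ˣ × oneUnits F ℓ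

/-- For monic `f`, `f.reverse mod X ^ (ℓ + 1)` records the `ℓ` coefficients below the leading
one. -/
noncomputable def residueClass : monicCoprime g →* ResidueGroup ℓ g :=
  MonoidHom.mk'
    (fun f ↦ ((isUnit_mk_iff_isCoprime.mpr f.2.2).unit,
      oneUnitsMk (f : F[X]).reverse (by rw [coeff_zero_reverse]; exact f.2.1)))
    (fun f h ↦ Prod.ext (Units.ext (map_mul _ _ _))
      (Subtype.ext (Units.ext (by simp [reverse_mul_of_domain]))))

variable {ℓ g}

theorem residueClass_eq_iff {f f' : monicCoprime g} :
    residueClass ℓ g f = residueClass ℓ g f' ↔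
      g ∣ (f : F[X]) - f' ∧ X ^ (ℓ + 1) ∣ (f : F[X]).reverse - (f' : F[X]).reverse := by
  simp only [residueClass, MonoidHom.mk'_apply, Prod.ext_iff, Units.ext_iff, Subtype.ext_iff,
    IsUnit.unit_spec, coe_oneUnitsMk, mk_eq_mk]

theorem residueClass_surjective (hg : g.Monic) : Function.Surjective (residueClass ℓ g) := by
  rintro ⟨α, κ⟩
  obtain ⟨x, hx⟩ := mk_surjective (α : AdjoinRoot g)
  obtain ⟨u, hu⟩ := mk_surjective ((κ : (TruncatedPoly F ℓ)ˣ) : TruncatedPoly F ℓ)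
  obtain ⟨f, hfm, hfx, hfu⟩ :=
    exists_monic_dvd_sub_and_X_pow_dvd_reverse_sub ℓ hg x u (coeff_zero_eq_one_of_mk_eq hu)
  have hxg : IsCoprime x g := isUnit_mk_iff_isCoprime.mp (hx ▸ α.isUnit)
  refine ⟨⟨f, hfm, (isCoprime_iff_of_dvd_sub hfx).mpr hxg⟩, ?_⟩
  simp only [residueClass, MonoidHom.mk'_apply, Prod.ext_iff, Units.ext_iff, Subtype.ext_iff,
    IsUnit.unit_spec, coe_oneUnitsMk, ← hx, ← hu, mk_eq_mk]
  exact ⟨hfx, hfu⟩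

end ResidueGroup

section InducedChar

variable {F : Type} [Field F] {ℓ : ℕ} {g : F[X]}

open Classical in
noncomputable def inducedChar (ψ : ResidueGroup ℓ g →* ℂˣ) (f : F[X]) : ℂ :=
  if hf : f ∈ monicCoprime g then ψ (residueClass ℓ g ⟨f, hf⟩) else 0

theorem inducedChar_coe (ψ : ResidueGroup ℓ g →* ℂˣ) (f : monicCoprime g) :
    inducedChar ψ f = ψ (residueClass ℓ g f) :=
  dif_pos f.2

theorem inducedChar_of_notMem (ψ : ResidueGroup ℓ g →* ℂˣ) {f : F[X]}
    (hf : f ∉ monicCoprime g) :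
    inducedChar ψ f = 0 :=
  dif_neg hf

theorem isCharModR_inducedChar (ψ : ResidueGroup ℓ g →* ℂˣ) :
    IsCharModR ℓ g (inducedChar ψ) := by
  refine ⟨fun f hfm ↦ inducedChar_of_notMem ψ (hfm ·.1),
    fun f _ hfg ↦ inducedChar_of_notMem ψ (hfg ·.2),
    fun f hfm hfg ↦ inducedChar_coe ψ ⟨f, hfm, hfg⟩ ▸ Units.ne_zero _, ?_, ?_⟩
  · intro f h hfm hhm
    by_cases hfh : IsCoprime f g ∧ IsCoprime h g
    · have := inducedChar_coe ψ (⟨f, hfm, hfh.1⟩ * ⟨h, hhm, hfh.2⟩)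
      rwa [map_mul, map_mul, Units.val_mul, ← inducedChar_coe, ← inducedChar_coe] at this
    · rw [inducedChar_of_notMem ψ (fun hmem ↦ hfh (IsCoprime.mul_left_iff.mp hmem.2))]
      rcases not_and_or.mp hfh with hf | hh
      · rw [inducedChar_of_notMem ψ (hf ·.2), zero_mul]
      · rw [inducedChar_of_notMem ψ (hh ·.2), mul_zero]
  · intro f h hfm hhm hfh hrev
    by_cases hfg : IsCoprime f g
    · have hhg := (isCoprime_iff_of_dvd_sub hfh).mp hfg
      have hclass : residueClass ℓ g ⟨f, hfm, hfg⟩ = residueClass ℓ g ⟨h, hhm, hhg⟩ :=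
        residueClass_eq_iff.mpr ⟨hfh, hrev⟩
      exact (inducedChar_coe ψ ⟨f, hfm, hfg⟩).trans
        (hclass ▸ inducedChar_coe ψ ⟨h, hhm, hhg⟩).symm
    · rw [inducedChar_of_notMem ψ (hfg ·.2), inducedChar_of_notMem ψ
        (fun hmem ↦ hfg ((isCoprime_iff_of_dvd_sub hfh).mpr hmem.2))]

theorem inducedChar_injective (hg : g.Monic) :
    Function.Injective (inducedChar : (ResidueGroup ℓ g →* ℂˣ) → F[X] → ℂ) := by
  intro ψ ψ' h
  refine (MonoidHom.cancel_right (residueClass_surjective hg)).mp (MonoidHom.ext fun f ↦ ?_)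
  have := congrFun h f
  rw [inducedChar_coe, inducedChar_coe] at this
  exact Units.ext this

theorem exists_inducedChar_eq (hg : g.Monic) {χ : F[X] → ℂ} (hχ : IsCharModR ℓ g χ) :
    ∃ ψ : ResidueGroup ℓ g →* ℂˣ, inducedChar ψ = χ := by
  obtain ⟨hmonic, hcoprime, hne, hmul, hcongr⟩ := hχ
  let χ' : monicCoprime g →* ℂˣ :=
    MonoidHom.mk' (fun f ↦ Units.mk0 (χ f) (hne f f.2.1 f.2.2))
      (fun f h ↦ Units.ext (hmul f h f.2.1 h.2.1))
  obtain ⟨ψ, hψ⟩ := MonoidHom.exists_comp_eq_of_surjective (θ := residueClass ℓ g)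
    (residueClass_surjective hg) χ' fun f f' h ↦
      Units.ext ((residueClass_eq_iff.mp h).elim (hcongr f f' f.2.1 f'.2.1))
  refine ⟨ψ, funext fun f ↦ ?_⟩
  by_cases hf : f ∈ monicCoprime g
  · rw [show f = ((⟨f, hf⟩ : monicCoprime g) : F[X]) from rfl, inducedChar_coe,
      ← MonoidHom.comp_apply, hψ]
    rfl
  · rw [inducedChar_of_notMem ψ hf]
    by_cases hfm : f.Monic
    · exact (hcoprime f hfm fun hfg ↦ hf ⟨hfm, hfg⟩).symm
    · exact (hmonic f hfm).symm

theorem isCharModR_iff_exists_inducedChar_eq (hg : g.Monic) {χ : F[X] → ℂ} :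
    IsCharModR ℓ g χ ↔ ∃ ψ : ResidueGroup ℓ g →* ℂˣ, inducedChar ψ = χ :=
  ⟨exists_inducedChar_eq hg, by rintro ⟨ψ, rfl⟩; exact isCharModR_inducedChar ψ⟩

end InducedChar

section Representatives

variable {F : Type*} [Field F] {ℓ : ℕ} {g b : F[X]} {A : Finset F[X]}

theorem injOn_mk_of_existsUnique
    (hA1 : ∀ a ∈ A, a.Monic ∧ IsCoprime a g ∧ X ^ (ℓ + 1) ∣ a.reverse - b.reverse)
    (hA2 : ∀ f : F[X], f.Monic → IsCoprime f g → X ^ (ℓ + 1) ∣ f.reverse - b.reverse →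
      ∃! a, a ∈ A ∧ g ∣ f - a ∧ X ^ (ℓ + 1) ∣ f.reverse - a.reverse) :
    Set.InjOn (mk g) A := by
  intro a ha a' ha' h
  obtain ⟨hm, hc, hrev⟩ := hA1 a ha
  exact (hA2 a hm hc hrev).unique ⟨ha, by simp, by simp⟩
    ⟨ha', mk_eq_mk.mp h, by simpa using dvd_sub hrev (hA1 a' ha').2.2⟩

theorem card_eq_natCard_units (hg : g.Monic) (hb : b.Monic)
    (hA1 : ∀ a ∈ A, a.Monic ∧ IsCoprime a g ∧ X ^ (ℓ + 1) ∣ a.reverse - b.reverse)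
    (hA2 : ∀ f : F[X], f.Monic → IsCoprime f g → X ^ (ℓ + 1) ∣ f.reverse - b.reverse →
      ∃! a, a ∈ A ∧ g ∣ f - a ∧ X ^ (ℓ + 1) ∣ f.reverse - a.reverse) :
    #A = Nat.card (AdjoinRoot g)ˣ := by
  rw [← Nat.card_eq_finsetCard]
  refine Nat.card_eq_of_bijective (fun a ↦ (isUnit_mk_iff_isCoprime.mpr (hA1 a a.2).2.1).unit)
    ⟨fun a a' h ↦ Subtype.ext
      (injOn_mk_of_existsUnique hA1 hA2 a.2 a'.2 (congrArg Units.val h)), fun α ↦ ?_⟩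
  obtain ⟨x, hx⟩ := mk_surjective (α : AdjoinRoot g)
  obtain ⟨f, hfm, hfx, hfb⟩ := exists_monic_dvd_sub_and_X_pow_dvd_reverse_sub ℓ hg x b.reverse
    (by rw [coeff_zero_reverse]; exact hb)
  have hfg : IsCoprime f g :=
    (isCoprime_iff_of_dvd_sub hfx).mpr (isUnit_mk_iff_isCoprime.mp (hx ▸ α.isUnit))
  obtain ⟨a, ⟨ha, hfa, -⟩, -⟩ := hA2 f hfm hfg hfb
  refine ⟨⟨a, ha⟩, Units.ext ?_⟩
  rw [IsUnit.unit_spec, ← hx, mk_eq_mk]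
  simpa using dvd_sub hfx hfa

end Representatives

theorem gauss_sum_second_moment_general
    (Fq : Type) [Field Fq] [Fintype Fq] (p : ℕ) [Algebra (ZMod p) Fq]
    (ℓ : ℕ) (g : Polynomial Fq) (hg : g.Monic)
    (b : Polynomial Fq) (hb : b.Monic)
    (A : Finset (Polynomial Fq))
    (hA1 : ∀ a ∈ A, a.Monic ∧ IsCoprime a g ∧
      (X : Polynomial Fq) ^ (ℓ + 1) ∣ (a.reverse - b.reverse))
    (hA2 : ∀ f : Polynomial Fq, f.Monic → IsCoprime f g →
      (X : Polynomial Fq) ^ (ℓ + 1) ∣ (f.reverse - b.reverse) →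
      ∃! a, a ∈ A ∧ g ∣ (f - a) ∧
        (X : Polynomial Fq) ^ (ℓ + 1) ∣ (f.reverse - a.reverse))
    (CH : Finset (Polynomial Fq → ℂ))
    (hCH : ∀ χ, χ ∈ CH ↔ IsCharModR ℓ g χ)
    (U : Finset (Polynomial Fq))
    (hU : ∀ x, x ∈ U ↔ x.degree < g.degree ∧ IsCoprime x g) :
    ∑ χ ∈ CH, (‖∑ a ∈ A, χ a * eChar p (resCoeff a g)‖) ^ 2 =
      (Fintype.card Fq : ℝ) ^ ℓ * (U.card : ℝ) ^ 2 := by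
  classical
  have := finite_of_monic hg
  have := finite_of_monic (monic_X_pow (R := Fq) (ℓ + 1))
  let _ : Fintype (ResidueGroup ℓ g →* ℂˣ) := Fintype.ofFinite _
  have hAM : ∀ a ∈ A, a ∈ monicCoprime g := fun a ha ↦ ⟨(hA1 a ha).1, (hA1 a ha).2.1⟩
  have hCH' : CH = univ.image (inducedChar (ℓ := ℓ) (g := g)) := by
    ext χ
    simp [hCH, isCharModR_iff_exists_inducedChar_eq hg]
  have hinj : Set.InjOn (residueClass ℓ g) (A.subtype (· ∈ monicCoprime g)) :=
    fun a ha a' ha' h ↦ Subtype.ext (injOn_mk_of_existsUnique hA1 hA2 (by simpa using ha)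
      (by simpa using ha') (congrArg (fun γ ↦ (γ.1 : AdjoinRoot g)) h))
  have hU' : #U = Nat.card (AdjoinRoot g)ˣ := by
    rw [← Nat.card_eq_finsetCard, ← natCard_units hg]
    exact Nat.card_congr (Equiv.subtypeEquivRight hU)
  rw [hCH', sum_image (inducedChar_injective hg).injOn]
  simp_rw [← sum_subtype_of_mem _ hAM, inducedChar_coe]
  rw [sum_norm_sq_sum_monoidHom_apply_mul hinj]
  simp only [norm_eChar, one_pow, sum_const, card_subtype, filter_true_of_mem hAM]
  rw [Nat.card_prod, natCard_oneUnits, card_eq_natCard_units hg hb hA1 hA2, hU',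
    Nat.card_eq_fintype_card (α := Fq)]
  push_cast
  ring

/-- Gauss sum identity:
`∑_{χ mod R_{ℓ,g}} |∑*_{a mod R_{ℓ,g}, a ≡ b mod R_ℓ} χ(a)·e(a/g)|² = q^ℓ·Φ(g)²`,
where `A` is a set of representatives of the invertible residues modulo
`R_{ℓ,g}` whose first `ℓ` coefficients agree with those of `b`. -/
theorem gauss_sum_second_moment
    (Fq : Type) [Field Fq] [Fintype Fq] (p : ℕ) [Fact p.Prime] [CharP Fq p]
    [Algebra (ZMod p) Fq]
    (ℓ : ℕ) (g : Polynomial Fq) (hg : g.Monic)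
    (b : Polynomial Fq) (hb : b.Monic)
    (A : Finset (Polynomial Fq))
    (hA1 : ∀ a ∈ A, a.Monic ∧ IsCoprime a g ∧
      (X : Polynomial Fq) ^ (ℓ + 1) ∣ (a.reverse - b.reverse))
    (hA2 : ∀ f : Polynomial Fq, f.Monic → IsCoprime f g →
      (X : Polynomial Fq) ^ (ℓ + 1) ∣ (f.reverse - b.reverse) →
      ∃! a, a ∈ A ∧ g ∣ (f - a) ∧
        (X : Polynomial Fq) ^ (ℓ + 1) ∣ (f.reverse - a.reverse))
    (CH : Finset (Polynomial Fq → ℂ))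
    (hCH : ∀ χ, χ ∈ CH ↔ IsCharModR ℓ g χ)
    (U : Finset (Polynomial Fq))
    (hU : ∀ x, x ∈ U ↔ x.degree < g.degree ∧ IsCoprime x g) :
    ∑ χ ∈ CH, (‖∑ a ∈ A, χ a * eChar p (resCoeff a g)‖) ^ 2 =
      (Fintype.card Fq : ℝ) ^ ℓ * (U.card : ℝ) ^ 2 :=
  gauss_sum_second_moment_general Fq p ℓ g hg b hb A hA1 hA2 CH hCH U hU
end

section
/- Let ξ = a/g + γ with a, g ∈ F_q[t], gcd(a,g) = 1, g monic, and |γ| ≤ 1/|g|². Then ∑_{f monic of degree k} |∑_{h monic of degree j} e(ξ·f·h)| ≪ q^{k+j}/|g| + q^k + |g|, with an absolute implied constant. -/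
open Polynomial

/-!
Write `L u` for the `t^{-1}` coefficient of `ξ u`; it is `F_q`-linear in `u`. The monic `h` of
degree `j` form a coset of the polynomials of degree `< j`, so the inner sum vanishes unless
`L (f t^i) = 0` for all `i < j`, and has absolute value at most `q^j` otherwise.

For `deg (u t^i) ≤ 2 deg g - 2` the hypothesis `|γ| ≤ |g|^{-2}` makes `L (u t^i)` the coefficient
of `t^{deg g - 1}` in `a u t^i mod g`, and the vanishing of these for `i < n` forces
`deg (a u mod g) < deg g - n`. As `a` is invertible mod `g`, a surviving `f` is therefore
determined by its coefficients of index `≥ deg g` together with the `deg g - n` lowest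
coefficients of `a f mod g`, where `n = min j (deg g)`: there are at most `q^{max k (deg g) - n}`
of them, and none when `k < deg g ≤ j`. Finally `q^j · q^{max k (deg g) - n}` is one of the three
terms of the bound.
-/

open Finset

section AddChar

variable {G R : Type*} [AddGroup G] [CommRing R] [IsDomain R]

theorem AddChar.sum_eq_zero_of_forall_add_mem (χ : AddChar G R) {s : Finset G} {v : G}
    (hv : χ v ≠ 1) (hs : ∀ x ∈ s, x + v ∈ s) : ∑ x ∈ s, χ x = 0 := by
  have hshift : s.map (addRightEmbedding v) = s :=
    map_eq_of_subset fun y hy => by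
      obtain ⟨x, hx, rfl⟩ := mem_map.mp hy
      exact hs x hx
  have hfix : (∑ x ∈ s, χ x) * χ v = ∑ x ∈ s, χ x := by
    conv_rhs => rw [← hshift, sum_map]
    simp only [addRightEmbedding_apply, AddChar.map_add_eq_mul, sum_mul]
  have hzero : (∑ x ∈ s, χ x) * (χ v - 1) = 0 := by rw [mul_sub, hfix, mul_one, sub_self]
  exact (mul_eq_zero.mp hzero).resolve_right (sub_ne_zero.mpr hv)

end AddChar

section TraceAddChar

variable {F : Type} [Field F] [Fintype F] (p : ℕ) [Fact p.Prime] [Algebra (ZMod p) F]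

noncomputable def traceAddChar : AddChar F ℂ :=
  ZMod.stdAddChar.compAddMonoidHom (Algebra.trace (ZMod p) F).toAddMonoidHom

theorem traceAddChar_apply (x : F) : traceAddChar p x = eChar p x := by
  simp [traceAddChar, eChar, ZMod.stdAddChar_apply, ZMod.toCircle_apply]

theorem traceAddChar_ne_one : traceAddChar p ≠ (1 : AddChar F ℂ) := by
  obtain ⟨x, hx⟩ := Algebra.trace_surjective (ZMod p) F 1
  refine AddChar.ne_one_iff.mpr ⟨x, fun h => one_ne_zero (ZMod.injective_toCircle (N := p) ?_)⟩
  simp only [traceAddChar, AddChar.compAddMonoidHom_apply, LinearMap.toAddMonoidHom_coe, hx,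
    ZMod.stdAddChar_apply] at h
  rw [AddChar.map_zero_eq_one]
  exact Circle.coe_eq_one.mp h

end TraceAddChar

section MonicSums

variable {F : Type*} [Field F]

theorem degree_sub_lt_of_monic {f₁ f₂ : F[X]} {k : ℕ} (hf₁ : f₁.Monic) (hf₂ : f₂.Monic)
    (hd₁ : f₁.natDegree = k) (hd₂ : f₂.natDegree = k) : (f₁ - f₂).degree < k := by
  have hd₁' : f₁.degree = k := by rw [degree_eq_natDegree hf₁.ne_zero, hd₁]
  have hd₂' : f₂.degree = k := by rw [degree_eq_natDegree hf₂.ne_zero, hd₂]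
  have hdeg := degree_sub_lt_left (hd₁'.trans hd₂'.symm) hf₁.ne_zero
    (by rw [hf₁.leadingCoeff, hf₂.leadingCoeff])
  rwa [hd₁'] at hdeg

theorem card_le_of_forall_monic [Fintype F] {k : ℕ} {M : Finset F[X]}
    (hM : ∀ f ∈ M, f.Monic ∧ f.natDegree = k) : #M ≤ Fintype.card F ^ k := by
  have hinj := card_le_card_of_injOn (fun (f : F[X]) (m : Fin k) => f.coeff m) (t := univ)
    (fun _ _ => mem_coe.mpr (mem_univ _)) fun f₁ h₁ f₂ h₂ heq => by
      obtain ⟨hm₁, hd₁⟩ := hM f₁ h₁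
      obtain ⟨hm₂, hd₂⟩ := hM f₂ h₂
      have hlt := (degree_lt_iff_coeff_zero _ _).mp (degree_sub_lt_of_monic hm₁ hm₂ hd₁ hd₂)
      refine sub_eq_zero.mp (ext fun m => ?_)
      rw [coeff_zero]
      rcases lt_or_ge m k with hmk | hkm
      · rw [coeff_sub, sub_eq_zero]
        exact congrFun heq ⟨m, hmk⟩
      · exact hlt m hkm
  simpa using hinj

variable (ψ : AddChar F ℂ) (L : F[X] →ₗ[F] F) {j : ℕ} {M : Finset F[X]}

theorem sum_addChar_monic_eq_zero (hψ : ψ ≠ 1) (hM : ∀ h, h ∈ M ↔ h.Monic ∧ h.natDegree = j)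
    (f : F[X]) {i : ℕ} (hi : i < j) (hL : L (f * X ^ i) ≠ 0) :
    ∑ h ∈ M, ψ (L (f * h)) = 0 := by
  obtain ⟨y, hy⟩ := AddChar.ne_one_iff.mp hψ
  let χ := ψ.compAddMonoidHom (L ∘ₗ LinearMap.mulLeft F f).toAddMonoidHom
  set v : F[X] := C (y / L (f * X ^ i)) * X ^ i
  have hv : χ v = ψ y := by
    have hfv : f * v = (y / L (f * X ^ i)) • (f * X ^ i) := by
      rw [smul_eq_C_mul]
      ring
    simp [χ, hfv, div_mul_cancel₀ _ hL]
  have hvdeg : v.degree < j := (degree_C_mul_X_pow_le i _).trans_lt (by exact_mod_cast hi)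
  refine AddChar.sum_eq_zero_of_forall_add_mem χ (hv ▸ hy) fun h hh => ?_
  obtain ⟨hm, hd⟩ := (hM h).mp hh
  have hlt : v.degree < h.degree := by rwa [degree_eq_natDegree hm.ne_zero, hd]
  exact (hM _).mpr ⟨hm.add_of_left hlt, (natDegree_add_eq_left_of_degree_lt hlt).trans hd⟩

theorem norm_sum_addChar_monic_le [Fintype F] [DecidableEq F] (hψ : ψ ≠ 1)
    (hM : ∀ h, h ∈ M ↔ h.Monic ∧ h.natDegree = j) (f : F[X]) :
    ‖∑ h ∈ M, ψ (L (f * h))‖ ≤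
      if ∀ i < j, L (f * X ^ i) = 0 then (Fintype.card F : ℝ) ^ j else 0 := by
  split_ifs with htriv
  · calc ‖∑ h ∈ M, ψ (L (f * h))‖ ≤ ∑ h ∈ M, ‖ψ (L (f * h))‖ := norm_sum_le _ _
      _ = #M := by simp only [AddChar.norm_apply, sum_const, nsmul_eq_mul, mul_one]
      _ ≤ (Fintype.card F : ℝ) ^ j := by
        exact_mod_cast card_le_of_forall_monic fun h hh => (hM h).mp hh
  · obtain ⟨i, hi, hL⟩ := not_forall₂.mp htriv
    rw [sum_addChar_monic_eq_zero ψ L hψ hM f hi hL, norm_zero]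

theorem sum_norm_sum_addChar_monic_le [Fintype F] [DecidableEq F] (hψ : ψ ≠ 1)
    (hM : ∀ h, h ∈ M ↔ h.Monic ∧ h.natDegree = j) (N : Finset F[X]) :
    ∑ f ∈ N, ‖∑ h ∈ M, ψ (L (f * h))‖ ≤
      #(N.filter fun f => ∀ i < j, L (f * X ^ i) = 0) * (Fintype.card F : ℝ) ^ j := by
  calc ∑ f ∈ N, ‖∑ h ∈ M, ψ (L (f * h))‖
      ≤ ∑ f ∈ N, if ∀ i < j, L (f * X ^ i) = 0 then (Fintype.card F : ℝ) ^ j else 0 :=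
        sum_le_sum fun f _ => norm_sum_addChar_monic_le ψ L hψ hM f
    _ = _ := by rw [sum_ite, sum_const, sum_const_zero, add_zero, nsmul_eq_mul]

end MonicSums

section Residue

theorem degree_mul_X_pow_lt {R : Type*} [Semiring R] {u : R[X]} {m i N : ℕ}
    (hu : u.degree < m) (h : m + i ≤ N) : (u * X ^ i).degree < (N : WithBot ℕ) := by
  rw [degree_lt_iff_coeff_zero] at hu ⊢
  intro n hn
  rw [coeff_mul_X_pow']
  split_ifs
  · exact hu _ (by omega)
  · rfl

theorem degree_lt_of_coeff_mul_X_pow_modByMonic_eq_zero {R : Type*} [CommRing R] [Nontrivial R]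
    {g r : R[X]} (hg : g.Monic) (hr : r.degree < g.natDegree) {n : ℕ} (hn : n ≤ g.natDegree)
    (h : ∀ i < n, ((r * X ^ i) %ₘ g).coeff (g.natDegree - 1) = 0) :
    r.degree < ↑(g.natDegree - n) := by
  induction n with
  | zero => simpa using hr
  | succ n ih =>
    have hlt := ih (by omega) fun i hi => h i (by omega)
    have hself : (r * X ^ n) %ₘ g = r * X ^ n := (modByMonic_eq_self_iff hg).mpr <| by
      rw [degree_eq_natDegree hg.ne_zero]
      exact degree_mul_X_pow_lt hlt (by omega)
    have htop := h n (by omega)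
    rw [hself, coeff_mul_X_pow', if_pos (by omega)] at htop
    rw [degree_lt_iff_coeff_zero] at hlt ⊢
    intro m hm
    rcases eq_or_lt_of_le hm with rfl | hm
    · rwa [show g.natDegree - 1 - n = g.natDegree - (n + 1) by omega] at htop
    · exact hlt m (by omega)

variable {F : Type} [Field F] {a g : F[X]} {φ : ℕ → F}

/-- `u ↦ x_{-1}(ξ u)`; the `% g` in `resCoeff` is unfolded by `Polynomial.mod_def`, so that
linearity is inherited from the pieces. -/
noncomputable def residueFunctional (a g : F[X]) (φ : ℕ → F) : F[X] →ₗ[F] F :=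
  lcoeff F (g.natDegree - 1) ∘ₗ modByMonicHom (g * C g.leadingCoeff⁻¹) ∘ₗ LinearMap.mulLeft F a +
    lsum fun i => LinearMap.mulRight F (φ i)

theorem residueFunctional_apply (u : F[X]) :
    residueFunctional a g φ u = resCoeff (a * u) g + ∑ i ∈ u.support, u.coeff i * φ i := by
  simp [residueFunctional, resCoeff, mod_def, sum_def]

theorem residueFunctional_eq_coeff_modByMonic (hg : g.Monic)
    (hφ : ∀ i, i + 1 < 2 * g.natDegree → φ i = 0) {u : F[X]}
    (hu : u.degree < ↑(2 * g.natDegree - 1)) :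
    residueFunctional a g φ u = ((a * u) %ₘ g).coeff (g.natDegree - 1) := by
  have hsum : ∑ i ∈ u.support, u.coeff i * φ i = 0 := sum_eq_zero fun i hi => by
    have hi' : (i : WithBot ℕ) < ↑(2 * g.natDegree - 1) :=
      (le_degree_of_ne_zero (mem_support_iff.mp hi)).trans_lt hu
    rw [hφ i (by norm_cast at hi'; omega), mul_zero]
  rw [residueFunctional_apply, hsum, add_zero, resCoeff, mod_def, hg.leadingCoeff, inv_one, C_1,
    mul_one]

theorem eq_zero_of_residueFunctional_eq_zero (hg : g.Monic) (hco : IsCoprime a g)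
    (hφ : ∀ i, i + 1 < 2 * g.natDegree → φ i = 0) {n : ℕ} (hn : n ≤ g.natDegree) {u : F[X]}
    (hu : u.degree < g.natDegree) (hL : ∀ i < n, residueFunctional a g φ (u * X ^ i) = 0)
    (hr : ∀ m < g.natDegree - n, ((a * u) %ₘ g).coeff m = 0) : u = 0 := by
  have hdeg : ((a * u) %ₘ g).degree < ↑(g.natDegree - n) := by
    refine degree_lt_of_coeff_mul_X_pow_modByMonic_eq_zero hg ?_ hn fun i hi => ?_
    · rw [← degree_eq_natDegree hg.ne_zero]
      exact degree_modByMonic_lt _ hg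
    · have hred : ((a * u) %ₘ g * X ^ i) %ₘ g = (a * (u * X ^ i)) %ₘ g :=
        modByMonic_eq_of_dvd_sub hg ⟨-((a * u) /ₘ g * X ^ i), by
          linear_combination X ^ i * modByMonic_add_div (a * u) g⟩
      rw [hred, ← hL i hi,
        residueFunctional_eq_coeff_modByMonic hg hφ (degree_mul_X_pow_lt hu (by omega))]
  have hmod : (a * u) %ₘ g = 0 := ext fun m => by
    rw [coeff_zero]
    rcases lt_or_ge m (g.natDegree - n) with hm | hm
    · exact hr m hm
    · exact (degree_lt_iff_coeff_zero _ _).mp hdeg m hm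
  refine eq_zero_of_dvd_of_degree_lt ?_ (by rwa [degree_eq_natDegree hg.ne_zero])
  exact hco.symm.dvd_of_dvd_mul_left ((modByMonic_eq_zero_iff_dvd hg).mp hmod)

theorem card_le_of_residueFunctional_eq_zero [Fintype F] (hg : g.Monic) (hco : IsCoprime a g)
    (hφ : ∀ i, i + 1 < 2 * g.natDegree → φ i = 0) {k n : ℕ} (hn : n ≤ g.natDegree)
    {T : Finset F[X]} (hT : ∀ f ∈ T, f.Monic ∧ f.natDegree = k ∧
      ∀ i < n, residueFunctional a g φ (f * X ^ i) = 0) :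
    #T ≤ Fintype.card F ^ (k - g.natDegree + (g.natDegree - n)) := by
  set d := g.natDegree
  have hinj := card_le_card_of_injOn (t := univ)
    (fun f => (fun m : Fin (k - d) => f.coeff (d + m),
      fun m : Fin (d - n) => ((a * f) %ₘ g).coeff m))
    (fun _ _ => mem_coe.mpr (mem_univ _)) fun f₁ h₁ f₂ h₂ heq => by
      obtain ⟨hm₁, hd₁, hL₁⟩ := hT f₁ h₁
      obtain ⟨hm₂, hd₂, hL₂⟩ := hT f₂ h₂
      simp only [Prod.mk.injEq, funext_iff] at heq
      obtain ⟨htop, hrem⟩ := heq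
      have hlt := (degree_lt_iff_coeff_zero _ _).mp (degree_sub_lt_of_monic hm₁ hm₂ hd₁ hd₂)
      refine sub_eq_zero.mp (eq_zero_of_residueFunctional_eq_zero hg hco hφ hn ?_ ?_ ?_)
      · refine (degree_lt_iff_coeff_zero _ _).mpr fun m hm => ?_
        rcases lt_or_ge m k with hmk | hkm
        · rw [coeff_sub, sub_eq_zero]
          simpa [show d + (m - d) = m by omega] using htop ⟨m - d, by omega⟩
        · exact hlt m hkm
      · intro i hi
        rw [sub_mul, map_sub, hL₁ i hi, hL₂ i hi, sub_self]
      · intro m hm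
        rw [mul_sub, sub_modByMonic, coeff_sub, sub_eq_zero]
        exact hrem ⟨m, hm⟩
  simpa [pow_add] using hinj

theorem not_forall_residueFunctional_eq_zero_of_natDegree_lt (hg : g.Monic)
    (hco : IsCoprime a g) (hφ : ∀ i, i + 1 < 2 * g.natDegree → φ i = 0) {f : F[X]}
    (hf : f.Monic) (hfg : f.natDegree < g.natDegree) :
    ¬ ∀ i < g.natDegree, residueFunctional a g φ (f * X ^ i) = 0 := fun hL =>
  hf.ne_zero <| eq_zero_of_residueFunctional_eq_zero hg hco hφ le_rfl
    ((natDegree_lt_iff_degree_lt hf.ne_zero).mp hfg) hL (by simp)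

theorem pow_sub_add_sub_min_mul_pow_le {Q : ℝ} (hQ : 0 < Q) {k j d : ℕ} (h : ¬ (k < d ∧ d ≤ j)) :
    Q ^ (k - d + (d - min j d)) * Q ^ j ≤ Q ^ (k + j) / Q ^ d + Q ^ k + Q ^ d := by
  have h₁ : 0 ≤ Q ^ (k + j) / Q ^ d := by positivity
  have h₂ : 0 ≤ Q ^ k := by positivity
  have h₃ : 0 ≤ Q ^ d := by positivity
  rw [← pow_add]
  rcases le_or_gt d j with hdj | hjd
  · have hexp : Q ^ (k - d + (d - min j d) + j) = Q ^ (k + j) / Q ^ d := by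
      rw [eq_div_iff (by positivity), ← pow_add]
      congr 1
      omega
    linarith
  · rcases le_or_gt d k with hdk | hkd
    · rw [show k - d + (d - min j d) + j = k by omega]
      linarith
    · rw [show k - d + (d - min j d) + j = d by omega]
      linarith

theorem card_filter_residueFunctional_eq_zero_mul_le [Fintype F] [DecidableEq F] (hg : g.Monic)
    (hco : IsCoprime a g) (hφ : ∀ i, i + 1 < 2 * g.natDegree → φ i = 0) {k j : ℕ}
    {N : Finset F[X]} (hN : ∀ f ∈ N, f.Monic ∧ f.natDegree = k) :
    #(N.filter fun f => ∀ i < j, residueFunctional a g φ (f * X ^ i) = 0) *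
        (Fintype.card F : ℝ) ^ j ≤
      (Fintype.card F : ℝ) ^ (k + j) / (Fintype.card F : ℝ) ^ g.natDegree +
        (Fintype.card F : ℝ) ^ k + (Fintype.card F : ℝ) ^ g.natDegree := by
  have hq : (0 : ℝ) < Fintype.card F := by exact_mod_cast Fintype.card_pos
  by_cases hkj : k < g.natDegree ∧ g.natDegree ≤ j
  · rw [filter_eq_empty_iff.mpr fun f hf hL =>
      not_forall_residueFunctional_eq_zero_of_natDegree_lt hg hco hφ (hN f hf).1
        ((hN f hf).2 ▸ hkj.1) fun i hi => hL i (hi.trans_le hkj.2)]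
    rw [card_empty, Nat.cast_zero, zero_mul]
    positivity
  · have hcard := card_le_of_residueFunctional_eq_zero hg hco hφ (min_le_right j g.natDegree)
      (T := N.filter fun f => ∀ i < j, residueFunctional a g φ (f * X ^ i) = 0) fun f hf => by
        obtain ⟨hfN, hL⟩ := mem_filter.mp hf
        exact ⟨(hN f hfN).1, (hN f hfN).2, fun i hi => hL i (hi.trans_le (min_le_left _ _))⟩
    calc _ ≤ (Fintype.card F : ℝ) ^ (k - g.natDegree + (g.natDegree - min j g.natDegree)) *
          (Fintype.card F : ℝ) ^ j := by gcongr; exact_mod_cast hcard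
      _ ≤ _ := pow_sub_add_sub_min_mul_pow_le hq hkj

end Residue

/-- `φ i` is the coefficient of `t^{-(i+1)}` in `γ`, so `|γ| ≤ 1/|g|²` reads `φ i = 0` for
`i + 1 < 2 deg g`, and the `t^{-1}` coefficient of `ξ·f·h` is
`resCoeff (a·f·h) g + ∑ᵢ (fh)ᵢ·φ i`. -/
theorem double_exp_sum_minor_arc :
    ∃ C : ℝ, 0 < C ∧
      ∀ (Fq : Type) [Field Fq] [Fintype Fq] (p : ℕ) [Fact p.Prime] [CharP Fq p]
        [Algebra (ZMod p) Fq]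
        (a g : Polynomial Fq), g.Monic → IsCoprime a g →
        ∀ (φ : ℕ → Fq), (∀ i, i + 1 < 2 * g.natDegree → φ i = 0) →
        ∀ (k j : ℕ) (Mk Mj : Finset (Polynomial Fq)),
        (∀ f, f ∈ Mk ↔ f.Monic ∧ f.natDegree = k) →
        (∀ h, h ∈ Mj ↔ h.Monic ∧ h.natDegree = j) →
        ∑ f ∈ Mk, ‖(∑ h ∈ Mj,
            eChar p (resCoeff (a * (f * h)) g +
              ∑ i ∈ (f * h).support, (f * h).coeff i * φ i))‖ ≤
          C * ((Fintype.card Fq : ℝ) ^ (k + j) / (Fintype.card Fq : ℝ) ^ g.natDegree +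
            (Fintype.card Fq : ℝ) ^ k + (Fintype.card Fq : ℝ) ^ g.natDegree) := by
  classical
  refine ⟨1, one_pos, fun Fq _ _ p _ _ _ a g hg hco φ hφ k j Mk Mj hMk hMj => ?_⟩
  simp only [← residueFunctional_apply, ← traceAddChar_apply, one_mul]
  exact (sum_norm_sum_addChar_monic_le _ _ (traceAddChar_ne_one p) hMj Mk).trans
    (card_filter_residueFunctional_eq_zero_mul_le hg hco hφ fun f hf => (hMk f).mp hf)
end

section
/- For α, β ∈ T = {ξ ∈ K_∞ : |ξ| < 1} and integers n ≥ 0, k ≥ 1, the number of monic polynomials f of degree n with ‖αf − β‖ < q^{−k} is at most max{1, q^{n−k}, q^n·‖α‖, q^{−k}/‖α‖}. -/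
/-!
Write `α = ∑ φα i t^{-(i+1)}`, so `φα (r - 1)` is its first nonzero coefficient. For a polynomial
`p` of degree `d < r`, the coefficient of `t^{-(i+1)}` in `α p` at `i = r - 1 - d` is exactly
`p.leadingCoeff * φα (r - 1)`. The difference of two counted polynomials has all these
coefficients zero for `i < k`, so its degree cannot lie in `[r - k, r)`. Hence a counted polynomial
is determined by its coefficients of degree `< r - k` and in `[r, n)`, giving at most
`q ^ ((r - k) + (n - r))` of them.
-/

open Polynomial Finset

namespace SmallFractionalPart

section Semiring

variable {R : Type*} [Semiring R]

/-- With `α = ∑ φ i t^{-(i+1)}`, the coefficient of `t^{-(i+1)}` in `α f`. -/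
def mulFracCoeff (φ : ℕ → R) (f : R[X]) (i : ℕ) : R :=
  f.sum fun j a => a * φ (i + j)

theorem mulFracCoeff_add (φ : ℕ → R) (f g : R[X]) (i : ℕ) :
    mulFracCoeff φ (f + g) i = mulFracCoeff φ f i + mulFracCoeff φ g i :=
  sum_add_index f g _ (fun _ => zero_mul _) fun _ _ _ => add_mul _ _ _

theorem mulFracCoeff_eq_leadingCoeff_mul {φ : ℕ → R} {r : ℕ} (hφ : ∀ i < r - 1, φ i = 0)
    {p : R[X]} (hp : p.natDegree < r) :
    mulFracCoeff φ p (r - 1 - p.natDegree) = p.leadingCoeff * φ (r - 1) := by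
  by_cases hp0 : p = 0
  · simp [hp0, mulFracCoeff]
  rw [mulFracCoeff, Polynomial.sum_def, sum_eq_single_of_mem _ (natDegree_mem_support_of_nonzero hp0)]
  · rw [leadingCoeff, Nat.sub_add_cancel (by omega)]
  · intro j hj hjd
    have : j < p.natDegree := (le_natDegree_of_mem_supp j hj).lt_of_ne hjd
    rw [hφ _ (by omega), mul_zero]

theorem Monic.coeff_eq_of_natDegree_le {f g : R[X]} (hf : f.Monic) (hg : g.Monic)
    (hfg : f.natDegree = g.natDegree) {j : ℕ} (hj : f.natDegree ≤ j) : f.coeff j = g.coeff j := by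
  rcases hj.eq_or_lt with rfl | hj
  · rw [hf.coeff_natDegree, hfg, hg.coeff_natDegree]
  · rw [coeff_eq_zero_of_natDegree_lt hj, coeff_eq_zero_of_natDegree_lt (hfg ▸ hj)]

end Semiring

section Ring

variable {R : Type*} [Ring R]

theorem eq_zero_of_mulFracCoeff_eq_zero [NoZeroDivisors R] {φ : ℕ → R} {r k : ℕ}
    (hφr : φ (r - 1) ≠ 0) (hφ : ∀ i < r - 1, φ i = 0) {p : R[X]}
    (hcoeff : ∀ j ∉ Ico (r - k) r, p.coeff j = 0) (hfrac : ∀ i < k, mulFracCoeff φ p i = 0) :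
    p = 0 := by
  by_contra hp0
  have hdeg : p.natDegree ∈ Ico (r - k) r := by
    by_contra h
    exact leadingCoeff_ne_zero.2 hp0 (hcoeff _ h)
  rw [mem_Ico] at hdeg
  have := mulFracCoeff_eq_leadingCoeff_mul hφ hdeg.2
  rw [hfrac _ (by omega)] at this
  exact mul_ne_zero (leadingCoeff_ne_zero.2 hp0) hφr this.symm

theorem Monic.eq_of_mulFracCoeff_eq [NoZeroDivisors R] {φ : ℕ → R} {n r k : ℕ}
    (hφr : φ (r - 1) ≠ 0) (hφ : ∀ i < r - 1, φ i = 0) {f g : R[X]}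
    (hf : f.Monic) (hg : g.Monic) (hfn : f.natDegree = n) (hgn : g.natDegree = n)
    (hfrac : ∀ i < k, mulFracCoeff φ f i = mulFracCoeff φ g i)
    (hcoeff : ∀ j ∈ range (r - k) ∪ Ico r n, f.coeff j = g.coeff j) : f = g := by
  refine sub_eq_zero.1 (eq_zero_of_mulFracCoeff_eq_zero (k := k) hφr hφ (fun j hj => ?_) fun i hi => ?_)
  · rw [coeff_sub, sub_eq_zero]
    by_cases hjn : n ≤ j
    · exact Monic.coeff_eq_of_natDegree_le hf hg (hfn.trans hgn.symm) (hfn ▸ hjn)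
    · simp only [mem_Ico, not_and_or, not_le, not_lt] at hj
      exact hcoeff j (by simp only [mem_union, mem_range, mem_Ico]; omega)
  · have := mulFracCoeff_add φ (f - g) g i
    rwa [sub_add_cancel, hfrac i hi, right_eq_add] at this

end Ring

theorem card_le_pow_of_coeff_injOn {R : Type*} [Semiring R] [Fintype R] (N : Finset R[X])
    (S : Finset ℕ) (hN : ∀ f ∈ N, ∀ g ∈ N, (∀ j ∈ S, f.coeff j = g.coeff j) → f = g) :
    #N ≤ Fintype.card R ^ #S := by
  classical
  calc #N ≤ #(univ : Finset (S → R)) :=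
        card_le_card_of_injOn (fun f j => f.coeff j) (fun _ _ => mem_univ _)
          fun f hf g hg hfg => hN f hf g hg fun j hj => congrFun hfg ⟨j, hj⟩
    _ = Fintype.card R ^ #S := by simp

theorem pow_le_max_zpow {x : ℝ} (hx : 1 ≤ x) (n k r : ℕ) :
    x ^ ((r - k) + (n - r)) ≤
      max (max 1 (x ^ ((n : ℤ) - (k : ℤ)))) (max (x ^ ((n : ℤ) - (r : ℤ))) (x ^ ((r : ℤ) - (k : ℤ)))) := by
  have hmono : Monotone (fun z : ℤ => x ^ z) := fun _ _ h => zpow_le_zpow_right₀ hx h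
  calc x ^ ((r - k) + (n - r)) = x ^ (((r - k + (n - r) : ℕ)) : ℤ) := (zpow_natCast _ _).symm
    _ ≤ x ^ (max (max 0 ((n : ℤ) - k)) (max ((n : ℤ) - r) ((r : ℤ) - k))) := hmono (by omega)
    _ = _ := by rw [hmono.map_max, hmono.map_max, hmono.map_max, zpow_zero]

end SmallFractionalPart

open SmallFractionalPart in
theorem count_small_fractional_part_general
    (Fq : Type) [Field Fq] [Fintype Fq]
    (φα φβ : ℕ → Fq) (n k r : ℕ)
    (hα1 : φα (r - 1) ≠ 0) (hα2 : ∀ i, i < r - 1 → φα i = 0)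
    (N : Finset (Polynomial Fq))
    (hN : ∀ f : Polynomial Fq, f ∈ N ↔ f.Monic ∧ f.natDegree = n ∧
      ∀ i < k, (∑ j ∈ f.support, f.coeff j * φα (i + j)) = φβ i) :
    (N.card : ℝ) ≤
      max (max 1 ((Fintype.card Fq : ℝ) ^ ((n : ℤ) - (k : ℤ))))
        (max ((Fintype.card Fq : ℝ) ^ ((n : ℤ) - (r : ℤ)))
          ((Fintype.card Fq : ℝ) ^ ((r : ℤ) - (k : ℤ)))) := by
  have hinj : ∀ f ∈ N, ∀ g ∈ N,
      (∀ j ∈ range (r - k) ∪ Ico r n, f.coeff j = g.coeff j) → f = g := by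
    intro f hf g hg hfg
    obtain ⟨hfm, hfn, hfφ⟩ := (hN f).1 hf
    obtain ⟨hgm, hgn, hgφ⟩ := (hN g).1 hg
    exact Monic.eq_of_mulFracCoeff_eq hα1 hα2 hfm hgm hfn hgn
      (fun i hi => (hfφ i hi).trans (hgφ i hi).symm) hfg
  have hcard := card_le_pow_of_coeff_injOn N _ hinj
  have hS : #(range (r - k) ∪ Ico r n) ≤ (r - k) + (n - r) :=
    (card_union_le _ _).trans (by simp)
  have hq : (1 : ℝ) ≤ Fintype.card Fq := by exact_mod_cast Fintype.card_pos
  calc (#N : ℝ) ≤ (Fintype.card Fq : ℝ) ^ ((r - k) + (n - r)) := by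
        exact_mod_cast hcard.trans (Nat.pow_le_pow_right Fintype.card_pos hS)
    _ ≤ _ := pow_le_max_zpow hq n k r

/-- Counting lemma: for `α, β ∈ T = {ξ : |ξ| < 1}` in `K_∞ = F_q((1/t))`,
represented by their coefficient sequences `φα i = α_{-(i+1)}`,
`φβ i = β_{-(i+1)}`, with `α ≠ 0` and `‖α‖ = q^{-r}` (i.e. `φα (r-1) ≠ 0` and
`φα i = 0` for `i < r - 1`), the number of monic polynomials `f` of degree `n`
with `‖αf − β‖ < q^{-k}` (i.e. the coefficients of `t^{-(i+1)}` in `αf − β`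
vanish for `i < k`) is at most `max {1, q^{n−k}, q^n·‖α‖, q^{-k}/‖α‖}`. -/
theorem count_small_fractional_part
    (Fq : Type) [Field Fq] [Fintype Fq]
    (φα φβ : ℕ → Fq) (n k r : ℕ) (hk : 1 ≤ k) (hr : 1 ≤ r)
    (hα1 : φα (r - 1) ≠ 0) (hα2 : ∀ i, i < r - 1 → φα i = 0)
    (N : Finset (Polynomial Fq))
    (hN : ∀ f : Polynomial Fq, f ∈ N ↔ f.Monic ∧ f.natDegree = n ∧
      ∀ i < k, (∑ j ∈ f.support, f.coeff j * φα (i + j)) = φβ i) :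
    (N.card : ℝ) ≤
      max (max 1 ((Fintype.card Fq : ℝ) ^ ((n : ℤ) - (k : ℤ))))
        (max ((Fintype.card Fq : ℝ) ^ ((n : ℤ) - (r : ℤ)))
          ((Fintype.card Fq : ℝ) ^ ((r : ℤ) - (k : ℤ)))) :=
  count_small_fractional_part_general Fq φα φβ n k r hα1 hα2 N hN
end
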